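/- arXiv:1406.2589 — 5 statements merged into one kernel-verified Lean document; each statement's English description precedes it below -/
import Mathlib

section
/- Let A ⊆ ℝ^d and α ≥ 0. If C^α(A) = ∞, then there exists a sequence (C_n)_{n∈ℕ} of pairwise disjoint cubes in ℝ^d with side lengths ∥C_n∥ → ∞ such that |⌊A⌋ ∩ C_n| / ∥C_n∥^α → ∞ as n → ∞. -/
open Set MeasureTheory Filter
open scoped ENNReal NNReal

noncomputable section

variable {ι : Type*} [Fintype ι]

/-- A (half-open) cube in `ℝ^ι` based at `a` with side length `s`. -/
def cube (a : EuclideanSpace ℝ ι) (s : ℝ) : Set (EuclideanSpace ℝ ι) :=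
  {x | ∀ i, a i ≤ x i ∧ x i < a i + s}

/-- Coordinatewise floor map. -/
def floorPt (x : EuclideanSpace ℝ ι) : EuclideanSpace ℝ ι := WithLp.toLp 2 (fun i => (⌊x i⌋ : ℝ))

/-- `⌊A⌋`, the image of `A` under the coordinatewise floor map. -/
def floorSet (A : Set (EuclideanSpace ℝ ι)) : Set (EuclideanSpace ℝ ι) := floorPt '' A

/-- The α-counting measure of `A`. -/
def countMeas (α : ℝ) (A : Set (EuclideanSpace ℝ ι)) : ℝ≥0∞ :=
  ⨅ ℓ : ℝ, ⨆ (a : EuclideanSpace ℝ ι) (s : ℝ) (_ : ℓ ≤ s ∧ 0 < s),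
    ((floorSet A ∩ cube a s).encard : ℝ≥0∞) / ENNReal.ofReal (s ^ α)

/-- The counting dimension of `A`. -/
def cdim (A : Set (EuclideanSpace ℝ ι)) : ℝ :=
  sInf {α : ℝ | 0 ≤ α ∧ countMeas α A = 0}

/-- The centered cube `[-ℓ, ℓ)^ι`. -/
def centeredCube (ℓ : ℝ) : Set (EuclideanSpace ℝ ι) :=
  cube (WithLp.toLp 2 (fun _ => -ℓ) : EuclideanSpace ℝ ι) (2 * ℓ)

/-- The α-mass measure of `A`. -/
def massMeas (α : ℝ) (A : Set (EuclideanSpace ℝ ι)) : ℝ≥0∞ :=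
  ⨅ L : ℝ, ⨆ (ℓ : ℝ) (_ : L ≤ ℓ ∧ 0 < ℓ),
    ((floorSet A ∩ centeredCube ℓ).encard : ℝ≥0∞) / ENNReal.ofReal ((2 * ℓ) ^ α)

/-- The (upper) mass dimension of `A`. -/
def mdim (A : Set (EuclideanSpace ℝ ι)) : ℝ :=
  sInf {α : ℝ | 0 ≤ α ∧ massMeas α A = 0}

/-!
Since `C^α(A) = ∞`, there are arbitrarily large cubes with arbitrarily large ratio. Discarding the
part of such a cube inside a fixed bounded region loses only finitely many points of `⌊A⌋`, and
the rest is covered by `2d` translates of the cube that avoid the region; by pigeonhole one of them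
keeps a `1 / (2d)` share of the points, so (as `α ≥ 0` and the side is at least `1`) its ratio is
still large. Choosing the cubes one at a time, each avoiding the bounded union of the previous
ones, gives the sequence.
-/

open Bornology

def countingRatio (α : ℝ) (A : Set (EuclideanSpace ℝ ι)) (a : EuclideanSpace ℝ ι) (s : ℝ) :
    ℝ≥0∞ :=
  ((floorSet A ∩ cube a s).encard : ℝ≥0∞) / ENNReal.ofReal (s ^ α)

omit [Fintype ι] in
lemma isBounded_cube (a : EuclideanSpace ℝ ι) (s : ℝ) : IsBounded (cube a s) := by
  refine isBounded_induced.2 <|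
    (IsBounded.pi fun i => Metric.isBounded_Icc (a i) (a i + s)).subset ?_
  rintro _ ⟨x, hx, rfl⟩ i -
  exact ⟨(hx i).1, (hx i).2.le⟩

lemma Bornology.IsBounded.exists_subset_cube {B : Set (EuclideanSpace ℝ ι)} (hB : IsBounded B) :
    ∃ q T, B ⊆ cube q T := by
  obtain ⟨R, hR⟩ := hB.subset_closedBall 0
  refine ⟨WithLp.toLp 2 fun _ => -R, 2 * R + 1, fun x hx i => ?_⟩
  have hxi : |x i| ≤ R :=
    (PiLp.norm_apply_le x i).trans (mem_closedBall_zero_iff.1 (hR hx))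
  dsimp only
  constructor <;> linarith [abs_le.1 hxi]

lemma finite_floorSet_inter_cube (A : Set (EuclideanSpace ℝ ι)) (a : EuclideanSpace ℝ ι) (s : ℝ) :
    (floorSet A ∩ cube a s).Finite := by
  refine ((Set.Finite.pi fun i => (Set.finite_Ico ⌈a i⌉ ⌈a i + s⌉).image
    (fun k : ℤ => (k : ℝ))).image (WithLp.toLp 2)).subset ?_
  rintro x ⟨⟨y, -, rfl⟩, hx⟩
  exact ⟨fun i => (⌊y i⌋ : ℝ),
    fun i _ => ⟨⌊y i⌋, ⟨Int.ceil_le.2 (hx i).1, Int.lt_ceil.2 (hx i).2⟩, rfl⟩, rfl⟩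

omit [Fintype ι] in
lemma mem_cube_update [DecidableEq ι] {a x : EuclideanSpace ℝ ι} {s c : ℝ} {i : ι}
    (hx : x ∈ cube a s) (hc : c ≤ x i) (hcs : x i < c + s) :
    x ∈ cube (WithLp.toLp 2 (Function.update a.ofLp i c)) s := by
  intro j
  rcases eq_or_ne j i with rfl | hj
  · simpa using ⟨hc, hcs⟩
  · simpa [hj] using hx j

omit [Fintype ι] in
lemma disjoint_cube_of_apply {a q : EuclideanSpace ℝ ι} {s T : ℝ} (i : ι)
    (h : a i + s ≤ q i ∨ q i + T ≤ a i) : Disjoint (cube a s) (cube q T) := by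
  refine Set.disjoint_left.2 fun x hxa hxq => ?_
  have := hxa i
  have := hxq i
  rcases h with h | h <;> linarith

omit [Fintype ι] in
lemma exists_cubes_disjoint_cover_cube_diff (a q : EuclideanSpace ℝ ι) (s T : ℝ) :
    ∃ b : ι × Bool → EuclideanSpace ℝ ι, (∀ p, Disjoint (cube (b p) s) (cube q T)) ∧
      cube a s \ cube q T ⊆ ⋃ p, cube (b p) s := by
  classical
  let c : ι × Bool → ℝ := fun p =>
    if p.2 then max (a p.1) (q p.1 + T) else min (a p.1) (q p.1 - s)
  refine ⟨fun p => WithLp.toLp 2 (Function.update a.ofLp p.1 (c p)), fun ⟨i, σ⟩ =>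
    disjoint_cube_of_apply i ?_, ?_⟩
  · cases σ
    · have := min_le_right (a i) (q i - s)
      left
      simp only [c, Bool.false_eq_true, if_false, Function.update_self]
      linarith
    · right
      simp [c]
  · rintro x ⟨hxa, hxq⟩
    obtain ⟨i, hi⟩ : ∃ i, x i < q i ∨ q i + T ≤ x i := by
      simpa only [cube, mem_ofPred_eq, not_forall, not_and_or, not_le, not_lt] using hxq
    rcases hi with hi | hi
    · refine mem_iUnion.2 ⟨(i, false), mem_cube_update hxa ?_ ?_⟩
      · simpa [c] using Or.inl (hxa i).1
      · have : x i < min (a i) (q i - s) + s := by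
          rw [← sub_lt_iff_lt_add, lt_min_iff]
          constructor <;> linarith [(hxa i).2]
        simpa [c] using this
    · refine mem_iUnion.2 ⟨(i, true), mem_cube_update hxa ?_ ?_⟩
      · simpa [c] using ⟨(hxa i).1, hi⟩
      · simpa [c, ← sub_lt_iff_lt_add] using Or.inl (hxa i).2

lemma encard_inter_le_add_sum {X κ : Type*} [Fintype κ] (F C Q : Set X) (S : κ → Set X)
    (h : C \ Q ⊆ ⋃ k, S k) :
    (F ∩ C).encard ≤ (F ∩ Q).encard + ∑ k, (F ∩ S k).encard := by
  calc (F ∩ C).encard ≤ ((F ∩ Q) ∪ ⋃ k, F ∩ S k).encard := by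
        refine encard_mono fun x ⟨hF, hC⟩ => ?_
        by_cases hQ : x ∈ Q
        · exact Or.inl ⟨hF, hQ⟩
        · obtain ⟨k, hk⟩ := mem_iUnion.1 (h ⟨hC, hQ⟩)
          exact Or.inr (mem_iUnion.2 ⟨k, hF, hk⟩)
    _ ≤ (F ∩ Q).encard + (⋃ k, F ∩ S k).encard := encard_union_le _ _
    _ ≤ _ := by gcongr; exact encard_iUnion_le_of_fintype _

omit [Fintype ι] in
lemma exists_lt_countingRatio_of_countMeas_eq_top {α : ℝ} {A : Set (EuclideanSpace ℝ ι)}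
    (h : countMeas α A = ⊤) (L : ℝ) {M : ℝ≥0∞} (hM : M < ⊤) :
    ∃ a s, L ≤ s ∧ 0 < s ∧ M < countingRatio α A a s := by
  rw [countMeas, iInf_eq_top] at h
  have hlt := h L ▸ hM
  simp only [lt_iSup_iff] at hlt
  obtain ⟨a, s, ⟨hLs, hs⟩, hlt⟩ := hlt
  exact ⟨a, s, hLs, hs, hlt⟩

lemma exists_cube_disjoint_le_countingRatio {α : ℝ} (hα : 0 ≤ α) {A : Set (EuclideanSpace ℝ ι)}
    (h : countMeas α A = ⊤) {B : Set (EuclideanSpace ℝ ι)} (hB : IsBounded B) {L : ℝ}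
    (hL : 1 ≤ L) {M : ℝ≥0∞} (hM : M ≠ ⊤) :
    ∃ a s, L ≤ s ∧ Disjoint (cube a s) B ∧ M ≤ countingRatio α A a s := by
  obtain ⟨q, T, hBq⟩ := hB.exists_subset_cube
  set K : ℝ≥0∞ := ((floorSet A ∩ cube q T).encard : ℝ≥0∞)
  have hK : K ≠ ⊤ := by
    simpa [K] using (finite_floorSet_inter_cube A q T).encard_lt_top.ne
  set n : ℝ≥0∞ := (Fintype.card (ι × Bool) : ℝ≥0∞)
  obtain ⟨a, s, hLs, -, hlt⟩ := exists_lt_countingRatio_of_countMeas_eq_top h L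
    (M := n * M + K) (by finiteness)
  set w := ENNReal.ofReal (s ^ α)
  have hw : 1 ≤ w := ENNReal.one_le_ofReal.2 (Real.one_le_rpow (hL.trans hLs) hα)
  have hw0 : w ≠ 0 := (zero_lt_one.trans_le hw).ne'
  obtain ⟨b, hbq, hcover⟩ := exists_cubes_disjoint_cover_cube_diff a q s T
  have hcount : ((floorSet A ∩ cube a s).encard : ℝ≥0∞) ≤
      K + ∑ p, ((floorSet A ∩ cube (b p) s).encard : ℝ≥0∞) := by
    have := ENat.toENNReal_mono (encard_inter_le_add_sum (floorSet A) _ _ _ hcover)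
    rwa [ENat.toENNReal_add, ← ENat.toENNRealRingHom_apply, map_sum] at this
  have hsum : ∑ _p : ι × Bool, M * w < ∑ p, ((floorSet A ∩ cube (b p) s).encard : ℝ≥0∞) := by
    rw [Finset.sum_const, Finset.card_univ, nsmul_eq_mul, ← ENNReal.add_lt_add_iff_left hK]
    calc K + n * (M * w) ≤ (n * M + K) * w := by
          rw [add_mul, mul_assoc, add_comm]
          gcongr
          exact le_mul_of_one_le_right' hw
      _ < (floorSet A ∩ cube a s).encard :=
          (ENNReal.lt_div_iff_mul_lt (Or.inl hw0) (Or.inl ENNReal.ofReal_ne_top)).1 hlt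
      _ ≤ _ := hcount
  obtain ⟨p, -, hp⟩ := Finset.exists_lt_of_sum_lt hsum
  exact ⟨b p, s, hLs, (hbq p).mono_right hBq,
    (ENNReal.le_div_iff_mul_le (Or.inl hw0) (Or.inl ENNReal.ofReal_ne_top)).2 hp.le⟩

lemma exists_seq_pairwise_disjoint_cube {α : ℝ} (hα : 0 ≤ α) {A : Set (EuclideanSpace ℝ ι)}
    (h : countMeas α A = ⊤) :
    ∃ (a : ℕ → EuclideanSpace ℝ ι) (s : ℕ → ℝ),
      (∀ n : ℕ, (n : ℝ) + 1 ≤ s n ∧ (n : ℝ≥0∞) ≤ countingRatio α A (a n) (s n)) ∧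
      Pairwise fun m n => Disjoint (cube (a m) (s m)) (cube (a n) (s n)) := by
  -- The label `k` of a triple `(k, a, s)` bounds the side and the ratio of `cube a s` from
  -- below; labels strictly increase along the sequence.
  obtain ⟨f, hf, hrel⟩ := exists_seq_of_forall_finset_exists
    (fun x : ℕ × EuclideanSpace ℝ ι × ℝ =>
      (x.1 : ℝ) + 1 ≤ x.2.2 ∧ (x.1 : ℝ≥0∞) ≤ countingRatio α A x.2.1 x.2.2)
    (fun x y => x.1 < y.1 ∧ Disjoint (cube x.2.1 x.2.2) (cube y.2.1 y.2.2)) fun S _ => by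
      set k := S.sup Prod.fst + 1
      obtain ⟨a, s, hks, hdisj, hkr⟩ := exists_cube_disjoint_le_countingRatio hα h
        ((isBounded_biUnion_finset S).2 fun x _ => isBounded_cube x.2.1 x.2.2)
        (L := (k : ℝ) + 1) (le_add_of_nonneg_left k.cast_nonneg) (ENNReal.natCast_ne_top k)
      exact ⟨(k, a, s), ⟨hks, hkr⟩, fun x hx =>
        ⟨Nat.lt_succ_of_le (S.le_sup hx), (hdisj.mono_right (subset_biUnion_of_mem hx)).symm⟩⟩
  have hk : ∀ n, n ≤ (f n).1 :=
    (strictMono_nat_of_lt_succ fun n => (hrel n (n + 1) n.lt_succ_self).1).id_le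
  refine ⟨fun n => (f n).2.1, fun n => (f n).2.2, fun n => ⟨?_, ?_⟩, fun m n hmn => ?_⟩
  · exact le_trans (by gcongr; exact_mod_cast hk n) (hf n).1
  · exact (Nat.cast_le.2 (hk n)).trans (hf n).2
  · rcases hmn.lt_or_gt with hmn | hmn
    · exact (hrel m n hmn).2
    · exact (hrel n m hmn).2.symm

/-- If the `α`-counting measure of `A` is infinite, then there is a sequence of pairwise
disjoint cubes with side lengths tending to infinity along which the ratio
`|⌊A⌋ ∩ Cₙ| / ∥Cₙ∥^α` tends to infinity. -/
theorem stmt_2 (d : ℕ) (α : ℝ) (hα : 0 ≤ α) (A : Set (EuclideanSpace ℝ (Fin d)))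
    (h : countMeas α A = ⊤) :
    ∃ (a : ℕ → EuclideanSpace ℝ (Fin d)) (s : ℕ → ℝ),
      (∀ n, 0 < s n) ∧
      (∀ n m, n ≠ m → Disjoint (cube (a n) (s n)) (cube (a m) (s m))) ∧
      Tendsto s atTop atTop ∧
      Tendsto (fun n => ((floorSet A ∩ cube (a n) (s n)).encard : ℝ≥0∞) /
        ENNReal.ofReal (s n ^ α)) atTop (nhds ⊤) := by
  obtain ⟨a, s, hbound, hdisj⟩ := exists_seq_pairwise_disjoint_cube hα h
  refine ⟨a, s, fun n => ?_, fun n m => @hdisj n m, ?_, ?_⟩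
  · linarith [(hbound n).1, n.cast_nonneg (α := ℝ)]
  · exact tendsto_atTop_mono (fun n => by linarith [(hbound n).1]) tendsto_natCast_atTop_atTop
  · exact tendsto_nhds_top_mono ENNReal.tendsto_nat_nhds_top
      (Eventually.of_forall fun n => (hbound n).2)

end
end

section
/- For every set A ⊆ ℝ^d, the covering dimension equals the counting dimension: covdim(A) = cdim(A). -/
/-!
Both measures are compared cube by cube. Covering `A ∩ C` by the unit cubes at the points of `⌊A⌋`
near `C` gives `H^α(A) ≤ 2^α C^α(A)`. Conversely, if `H^α(A) = 0`, then for every large cube `C`,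
with `C'` its enlargement by one, `A ∩ C'` has a cover by cubes `C_i` of side at most `∥C'∥/4`
with `Σ (∥C_i∥/∥C'∥)^α < 4^{-α}`. Each point of `⌊A⌋ ∩ C` lies in some `C_i` enlarged by one, so
induction on the side length gives `|⌊A⌋ ∩ C| ≤ K ∥C∥^α` for all cubes, whence `C^β(A) = 0` for
every `β > α`. Hence both dimensions are the infimum of the same exponents up to endpoints, and
`C^{d+1}(A) = 0` keeps these sets nonempty.
-/

open Set MeasureTheory Filter
open scoped ENNReal NNReal

noncomputable section

variable {ι : Type*} [Fintype ι]

/-- The set of values `Σ_i (∥C_i∥/∥C∥)^α` over all admissible countable cubic covers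
`{C_i}` of `A ∩ C`, where `C` is the cube based at `a` with side length `s`, and the
admissibility constraint is `1 ≤ ∥C_i∥ ≤ r·∥C∥`.  A countable cover is encoded by a set
`I ⊆ ℕ` of indices together with base points `b i` and side lengths `t i`. -/
def coverSums (α r : ℝ) (A : Set (EuclideanSpace ℝ ι)) (a : EuclideanSpace ℝ ι) (s : ℝ) :
    Set ℝ≥0∞ :=
  {x | ∃ (I : Set ℕ) (b : ℕ → EuclideanSpace ℝ ι) (t : ℕ → ℝ),
    (A ∩ cube a s ⊆ ⋃ i ∈ I, cube (b i) (t i)) ∧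
    (∀ i ∈ I, 1 ≤ t i ∧ t i ≤ r * s) ∧
    x = ∑' i : I, ENNReal.ofReal ((t (i : ℕ) / s) ^ α)}

open Classical in
/-- The infimum of `Σ_i (∥C_i∥/∥C∥)^α` over admissible covers, with the convention that the
infimum of the empty set is `0`. -/
def coverInf (α r : ℝ) (A : Set (EuclideanSpace ℝ ι)) (a : EuclideanSpace ℝ ι) (s : ℝ) :
    ℝ≥0∞ :=
  if (coverSums α r A a s).Nonempty then sInf (coverSums α r A a s) else 0

/-- The `α`-covering measure `H^α(A) = lim_{r → 0} limsup_{∥C∥ → ∞} inf {Σ_i (∥C_i∥/∥C∥)^α}`.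
Since the inner quantity is nonincreasing in `r`, the limit as `r → 0` is the supremum over
`r > 0`; the limsup over cubes `C` with `∥C∥ → ∞` is the infimum over `ℓ` of the supremum
over cubes with `∥C∥ ≥ ℓ`. -/
def covMeas (α : ℝ) (A : Set (EuclideanSpace ℝ ι)) : ℝ≥0∞ :=
  ⨆ (r : ℝ) (_ : 0 < r), ⨅ ℓ : ℝ, ⨆ (a : EuclideanSpace ℝ ι) (s : ℝ) (_ : ℓ ≤ s ∧ 0 < s),
    coverInf α r A a s

/-- The covering dimension of `A`. -/
def covdim (A : Set (EuclideanSpace ℝ ι)) : ℝ :=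
  sInf {α : ℝ | 0 ≤ α ∧ covMeas α A = 0}


end

lemma Set.encard_iUnion_le_tsum {α β : Type*} [Countable β] (s : β → Set α) :
    ((⋃ i, s i).encard : ℝ≥0∞) ≤ ∑' i, ((s i).encard : ℝ≥0∞) := by
  let _ : MeasurableSpace α := ⊤
  have : DiscreteMeasurableSpace α := ⟨fun _ => trivial⟩
  simpa only [Measure.count_apply (.of_discrete)] using measure_iUnion_le (μ := Measure.count) s

lemma Int.card_Ico_ceil_le (a : ℝ) {s : ℝ} (hs : 0 ≤ s) :
    ((Finset.Ico ⌈a⌉ ⌈a + s⌉).card : ℝ) ≤ s + 1 := by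
  rw [Int.card_Ico, ← Int.cast_natCast, Int.toNat_eq_max]
  push_cast
  exact max_le (by linarith [Int.ceil_lt_add_one (a + s), Int.le_ceil a]) (by linarith)

section LatticePoints

variable {ι : Type*}

@[simp]
lemma floorPt_apply (x : EuclideanSpace ℝ ι) (i : ι) : floorPt x i = ⌊x i⌋ := rfl

lemma mem_cube_floorPt (x : EuclideanSpace ℝ ι) : x ∈ cube (floorPt x) 1 :=
  fun _ => ⟨Int.floor_le _, Int.lt_floor_add_one _⟩

lemma floorPt_mem_cube_of_mem {x b : EuclideanSpace ℝ ι} {t : ℝ} (hx : x ∈ cube b t) :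
    floorPt x ∈ cube (WithLp.toLp 2 fun i => b i - 1) (t + 1) := fun i => by
  have := hx i
  have := Int.floor_le (x i)
  have := Int.lt_floor_add_one (x i)
  simp only [floorPt_apply]
  constructor <;> linarith

lemma mem_cube_add_one_of_floorPt_mem {x a : EuclideanSpace ℝ ι} {s : ℝ}
    (hx : floorPt x ∈ cube a s) : x ∈ cube a (s + 1) := fun i => by
  have hxi : a i ≤ ⌊x i⌋ ∧ (⌊x i⌋ : ℝ) < a i + s := hx i
  have := Int.floor_le (x i)
  have := Int.lt_floor_add_one (x i)
  constructor <;> linarith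

lemma floorSet_subset_range_intCast (A : Set (EuclideanSpace ℝ ι)) :
    floorSet A ⊆ range fun z : ι → ℤ => WithLp.toLp 2 fun i => (z i : ℝ) := by
  rintro _ ⟨x, -, rfl⟩
  exact ⟨fun i => ⌊x i⌋, rfl⟩

lemma floorSet_countable [Finite ι] (A : Set (EuclideanSpace ℝ ι)) : (floorSet A).Countable :=
  (countable_range _).mono (floorSet_subset_range_intCast A)

lemma encard_floorSet_inter_cube_le [Fintype ι] (A : Set (EuclideanSpace ℝ ι))
    (a : EuclideanSpace ℝ ι) {s : ℝ} (hs : 0 ≤ s) :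
    ((floorSet A ∩ cube a s).encard : ℝ≥0∞) ≤ ENNReal.ofReal ((s + 1) ^ Fintype.card ι) := by
  classical
  set box := Fintype.piFinset fun i => Finset.Ico ⌈a i⌉ ⌈a i + s⌉
  have hsub : floorSet A ∩ cube a s ⊆
      (fun z : ι → ℤ => WithLp.toLp 2 fun i => (z i : ℝ)) '' (box : Set (ι → ℤ)) := by
    rintro _ ⟨⟨x, -, rfl⟩, hx⟩
    refine ⟨fun i => ⌊x i⌋, Fintype.mem_piFinset.2 fun i => ?_, rfl⟩
    exact Finset.mem_Ico.2 ⟨Int.ceil_le.2 (hx i).1, Int.lt_ceil.2 (hx i).2⟩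
  have hcard : (floorSet A ∩ cube a s).encard ≤ (box.card : ℕ) :=
    ((encard_le_encard hsub).trans (encard_image_le _ _)).trans_eq
      (encard_coe_eq_coe_finsetCard box)
  refine (ENat.toENNReal_le.2 hcard).trans ?_
  rw [ENat.toENNReal_coe, Fintype.card_piFinset, Nat.cast_prod, ENNReal.ofReal_pow (by linarith),
    ← Finset.card_univ]
  refine Finset.prod_le_pow_card (N := ℝ≥0∞) _ _ _ fun i _ => ?_
  rw [← ENNReal.ofReal_natCast]
  exact ENNReal.ofReal_le_ofReal (Int.card_Ico_ceil_le _ hs)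

lemma encard_floorSet_inter_cube_le_tsum {A : Set (EuclideanSpace ℝ ι)}
    {a : EuclideanSpace ℝ ι} {s : ℝ} {I : Set ℕ} {b : ℕ → EuclideanSpace ℝ ι} {t : ℕ → ℝ}
    (hcover : A ∩ cube a (s + 1) ⊆ ⋃ i ∈ I, cube (b i) (t i)) :
    ((floorSet A ∩ cube a s).encard : ℝ≥0∞) ≤
      ∑' i : I, ((floorSet A ∩ cube (WithLp.toLp 2 fun j => b i j - 1) (t i + 1)).encard :
        ℝ≥0∞) := by
  refine le_trans ?_ (Set.encard_iUnion_le_tsum _)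
  refine ENat.toENNReal_le.2 (encard_le_encard ?_)
  rintro _ ⟨⟨x, hxA, rfl⟩, hx⟩
  obtain ⟨i, hi, hxi⟩ := mem_iUnion₂.1 (hcover ⟨hxA, mem_cube_add_one_of_floorPt_mem hx⟩)
  exact mem_iUnion.2 ⟨⟨i, hi⟩, ⟨x, hxA, rfl⟩, floorPt_mem_cube_of_mem hxi⟩

end LatticePoints

section Covers

variable {ι : Type*} {α r s : ℝ} {A : Set (EuclideanSpace ℝ ι)} {a : EuclideanSpace ℝ ι}

lemma encard_mul_mem_coverSums {F : Set (EuclideanSpace ℝ ι)} (hF : F.Countable)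
    (hrs : 1 ≤ r * s) (hcover : A ∩ cube a s ⊆ ⋃ z ∈ F, cube z 1) :
    (F.encard : ℝ≥0∞) * ENNReal.ofReal ((1 / s) ^ α) ∈ coverSums α r A a s := by
  have := hF.to_subtype
  obtain ⟨e, he⟩ := Countable.exists_injective_nat F
  refine ⟨range e, Function.extend e Subtype.val 0, fun _ => 1, ?_,
    fun _ _ => ⟨le_rfl, hrs⟩, ?_⟩
  · intro x hx
    obtain ⟨z, hz, hxz⟩ := mem_iUnion₂.1 (hcover hx)
    refine mem_iUnion₂.2 ⟨e ⟨z, hz⟩, mem_range_self _, ?_⟩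
    rwa [he.extend_apply]
  · rw [ENNReal.tsum_set_const, ← image_univ, he.encard_image, encard_univ,
      ENat.card_coe_set_eq]

lemma coverSums_nonempty [Finite ι] (hrs : 1 ≤ r * s) : (coverSums α r A a s).Nonempty :=
  ⟨_, encard_mul_mem_coverSums (floorSet_countable A) hrs fun x hx =>
    mem_iUnion₂.2 ⟨floorPt x, mem_image_of_mem _ hx.1, mem_cube_floorPt x⟩⟩

lemma coverInf_le {x : ℝ≥0∞} (hx : x ∈ coverSums α r A a s) : coverInf α r A a s ≤ x := by
  rw [coverInf, if_pos ⟨x, hx⟩]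
  exact sInf_le hx

lemma exists_mem_coverSums_lt [Finite ι] {δ : ℝ≥0∞} (hrs : 1 ≤ r * s)
    (h : coverInf α r A a s < δ) :
    ∃ x ∈ coverSums α r A a s, x < δ := by
  rw [coverInf, if_pos (coverSums_nonempty hrs)] at h
  exact sInf_lt_iff.1 h

end Covers

section CoveringLeCounting

variable {ι : Type*} [Finite ι] {α : ℝ} {A : Set (EuclideanSpace ℝ ι)}

lemma coverInf_le_ofReal_mul_encard_div {r s : ℝ} (hα : 0 ≤ α) (hs : 1 ≤ s)
    (hrs : 1 ≤ r * s) (a : EuclideanSpace ℝ ι) :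
    coverInf α r A a s ≤ ENNReal.ofReal (2 ^ α) *
      ((floorSet A ∩ cube (WithLp.toLp 2 fun j => a j - 1) (s + 1)).encard /
        ENNReal.ofReal ((s + 1) ^ α)) := by
  set F := floorSet A ∩ cube (WithLp.toLp 2 fun j => a j - 1) (s + 1)
  have hmem := encard_mul_mem_coverSums (α := α) (a := a) (F := F)
    ((floorSet_countable A).mono inter_subset_left) hrs fun x hx => mem_iUnion₂.2
      ⟨floorPt x, ⟨⟨x, hx.1, rfl⟩, floorPt_mem_cube_of_mem hx.2⟩, mem_cube_floorPt x⟩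
  have hscale : ENNReal.ofReal ((1 / s) ^ α) ≤
      ENNReal.ofReal (2 ^ α) / ENNReal.ofReal ((s + 1) ^ α) := by
    rw [← ENNReal.ofReal_div_of_pos (by positivity), ← Real.div_rpow (by norm_num) (by linarith)]
    refine ENNReal.ofReal_le_ofReal (Real.rpow_le_rpow (by positivity) ?_ hα)
    rw [div_le_div_iff₀ (by linarith) (by linarith)]
    linarith
  calc coverInf α r A a s ≤ F.encard * ENNReal.ofReal ((1 / s) ^ α) := coverInf_le hmem
    _ ≤ F.encard * (ENNReal.ofReal (2 ^ α) / ENNReal.ofReal ((s + 1) ^ α)) := by gcongr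
    _ = _ := by rw [← mul_div_assoc, mul_comm, mul_div_assoc]

lemma covMeas_le_ofReal_mul_countMeas (hα : 0 ≤ α) (A : Set (EuclideanSpace ℝ ι)) :
    covMeas α A ≤ ENNReal.ofReal (2 ^ α) * countMeas α A := by
  refine iSup₂_le fun r hr => ?_
  rw [countMeas,
    ENNReal.mul_iInf_of_ne (ENNReal.ofReal_pos.2 (by positivity)).ne' ENNReal.ofReal_ne_top]
  refine le_iInf fun ℓ => (iInf_le _ (max ℓ (max 1 r⁻¹))).trans ?_
  refine iSup_le fun a => iSup_le fun s => iSup_le fun ⟨hLs, hs⟩ => ?_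
  have hs1 : 1 ≤ s := (le_max_left _ _).trans ((le_max_right _ _).trans hLs)
  have hrs : 1 ≤ r * s :=
    (inv_le_iff_one_le_mul₀' hr).1 ((le_max_right _ _).trans ((le_max_right _ _).trans hLs))
  refine (coverInf_le_ofReal_mul_encard_div hα hs1 hrs a).trans ?_
  gcongr
  exact le_iSup_of_le _ (le_iSup_of_le (s + 1) (le_iSup_of_le
    ⟨by linarith [(le_max_left _ _).trans hLs], by linarith⟩ le_rfl))

lemma covMeas_eq_zero_of_countMeas_eq_zero (hα : 0 ≤ α) (h : countMeas α A = 0) :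
    covMeas α A = 0 :=
  nonpos_iff_eq_zero.1 <| by simpa [h] using covMeas_le_ofReal_mul_countMeas hα A

end CoveringLeCounting

section CountingLeCovering

variable {ι : Type*} {α : ℝ} {A : Set (EuclideanSpace ℝ ι)}

lemma encard_floorSet_inter_cube_le_of_coverInf_lt [Finite ι] {r s : ℝ}
    {a : EuclideanSpace ℝ ι} {K δ : ℝ≥0∞} (hα : 0 ≤ α) (hs : 0 ≤ s) (hrs : 1 ≤ r * (s + 1))
    (hcov : coverInf α r A a (s + 1) < δ)
    (ih : ∀ t, 1 ≤ t → t ≤ r * (s + 1) → ∀ b : EuclideanSpace ℝ ι,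
      ((floorSet A ∩ cube b (t + 1)).encard : ℝ≥0∞) ≤ K * ENNReal.ofReal ((t + 1) ^ α)) :
    ((floorSet A ∩ cube a s).encard : ℝ≥0∞) ≤
      K * ENNReal.ofReal ((2 * (s + 1)) ^ α) * δ := by
  obtain ⟨_, ⟨I, b, t, hcover, ht, rfl⟩, hlt⟩ := exists_mem_coverSums_lt hrs hcov
  have hterm : ∀ i : I, ENNReal.ofReal ((t i + 1) ^ α) ≤
      ENNReal.ofReal ((2 * (s + 1)) ^ α) * ENNReal.ofReal ((t i / (s + 1)) ^ α) := by
    intro i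
    have ht1 := (ht i i.2).1
    rw [← ENNReal.ofReal_mul (by positivity), ← Real.mul_rpow (by positivity) (by positivity)]
    refine ENNReal.ofReal_le_ofReal (Real.rpow_le_rpow (by positivity) ?_ hα)
    rw [mul_assoc, mul_div_cancel₀ _ (by linarith)]
    linarith
  calc ((floorSet A ∩ cube a s).encard : ℝ≥0∞)
      ≤ ∑' i : I, ((floorSet A ∩ cube (WithLp.toLp 2 fun j => b i j - 1) (t i + 1)).encard :
          ℝ≥0∞) := encard_floorSet_inter_cube_le_tsum hcover
    _ ≤ ∑' i : I, K * ENNReal.ofReal ((2 * (s + 1)) ^ α) *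
          ENNReal.ofReal ((t i / (s + 1)) ^ α) :=
        ENNReal.tsum_le_tsum fun i => (ih _ (ht i i.2).1 (ht i i.2).2 _).trans <| by
          rw [mul_assoc]
          gcongr
          exact hterm i
    _ = K * ENNReal.ofReal ((2 * (s + 1)) ^ α) *
          ∑' i : I, ENNReal.ofReal ((t i / (s + 1)) ^ α) := ENNReal.tsum_mul_left
    _ ≤ _ := by gcongr

lemma encard_floorSet_inter_cube_le_of_forall_coverInf_lt [Fintype ι] {L : ℝ} (hα : 0 ≤ α)
    (hL : 3 ≤ L) (hcov : ∀ (a : EuclideanSpace ℝ ι) (s : ℝ), L ≤ s →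
      coverInf α 4⁻¹ A a (s + 1) < ENNReal.ofReal (4⁻¹ ^ α))
    {s : ℝ} (hs : 1 ≤ s) (a : EuclideanSpace ℝ ι) :
    ((floorSet A ∩ cube a s).encard : ℝ≥0∞) ≤
      ENNReal.ofReal ((L + 1) ^ Fintype.card ι) * ENNReal.ofReal (s ^ α) := by
  suffices hind : ∀ n : ℕ, ∀ s : ℝ, 1 ≤ s → s ≤ L + n → ∀ a : EuclideanSpace ℝ ι,
      ((floorSet A ∩ cube a s).encard : ℝ≥0∞) ≤
        ENNReal.ofReal ((L + 1) ^ Fintype.card ι) * ENNReal.ofReal (s ^ α) from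
    hind ⌈s⌉₊ s hs (by linarith [Nat.le_ceil s]) a
  intro n
  induction n with
  | zero =>
    intro s hs hsL a
    calc ((floorSet A ∩ cube a s).encard : ℝ≥0∞)
        ≤ ENNReal.ofReal ((s + 1) ^ Fintype.card ι) :=
          encard_floorSet_inter_cube_le A a (by linarith)
      _ ≤ ENNReal.ofReal ((L + 1) ^ Fintype.card ι) :=
          ENNReal.ofReal_le_ofReal (pow_le_pow_left₀ (by linarith) (by simpa using hsL) _)
      _ ≤ _ := le_mul_of_one_le_right' (ENNReal.one_le_ofReal.2 (Real.one_le_rpow hs hα))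
  | succ n ih =>
    intro s hs hsL a
    rcases le_or_gt s (L + n) with hsn | hsn
    · exact ih s hs hsn a
    push_cast at hsL
    refine (encard_floorSet_inter_cube_le_of_coverInf_lt hα (by linarith) (by linarith)
      (hcov a s (by linarith)) fun t ht htr b => ih (t + 1) (by linarith) (by linarith) b).trans ?_
    rw [mul_assoc, ← ENNReal.ofReal_mul (by positivity),
      ← Real.mul_rpow (by positivity) (by norm_num)]
    gcongr
    linarith

lemma exists_encard_floorSet_inter_cube_le_of_covMeas_eq_zero [Fintype ι] (hα : 0 ≤ α)
    (h : covMeas α A = 0) :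
    ∃ K : ℝ≥0∞, K ≠ ∞ ∧ ∀ s : ℝ, 1 ≤ s → ∀ a : EuclideanSpace ℝ ι,
      ((floorSet A ∩ cube a s).encard : ℝ≥0∞) ≤ K * ENNReal.ofReal (s ^ α) := by
  obtain ⟨ℓ₀, hℓ₀⟩ : ∃ ℓ₀ : ℝ, ⨆ (a : EuclideanSpace ℝ ι) (s : ℝ) (_ : ℓ₀ ≤ s ∧ 0 < s),
      coverInf α 4⁻¹ A a s < ENNReal.ofReal (4⁻¹ ^ α) := by
    have : (⨅ ℓ : ℝ, ⨆ (a : EuclideanSpace ℝ ι) (s : ℝ) (_ : ℓ ≤ s ∧ 0 < s),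
        coverInf α 4⁻¹ A a s) ≤ covMeas α A := le_iSup₂_of_le (4⁻¹ : ℝ) (by norm_num) le_rfl
    exact iInf_lt_iff.1 (this.trans_lt (h ▸ ENNReal.ofReal_pos.2 (by positivity)))
  refine ⟨_, ENNReal.ofReal_ne_top, fun s hs a =>
    encard_floorSet_inter_cube_le_of_forall_coverInf_lt hα (le_max_right ℓ₀ 3) ?_ hs a⟩
  intro a s hs
  refine lt_of_le_of_lt ?_ hℓ₀
  refine le_iSup₂_of_le a (s + 1) (le_iSup_of_le ⟨?_, ?_⟩ le_rfl) <;>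
    linarith [le_max_left ℓ₀ 3, le_max_right ℓ₀ 3]

lemma countMeas_eq_zero_of_encard_le {γ β : ℝ} (hγβ : γ < β) {K : ℝ≥0∞} (hK : K ≠ ∞)
    (hN : ∀ s : ℝ, 1 ≤ s → ∀ a : EuclideanSpace ℝ ι,
      ((floorSet A ∩ cube a s).encard : ℝ≥0∞) ≤ K * ENNReal.ofReal (s ^ γ)) :
    countMeas β A = 0 := by
  have hle : ∀ ℓ : ℝ, 1 ≤ ℓ → countMeas β A ≤ K * ENNReal.ofReal (ℓ ^ (γ - β)) := by
    intro ℓ hℓ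
    refine (iInf_le _ ℓ).trans (iSup_le fun a => iSup_le fun s => iSup_le fun ⟨hℓs, hs⟩ => ?_)
    rw [ENNReal.div_le_iff (ENNReal.ofReal_pos.2 (by positivity)).ne' ENNReal.ofReal_ne_top]
    calc ((floorSet A ∩ cube a s).encard : ℝ≥0∞) ≤ K * ENNReal.ofReal (s ^ γ) :=
          hN s (hℓ.trans hℓs) a
      _ = K * ENNReal.ofReal (s ^ (γ - β)) * ENNReal.ofReal (s ^ β) := by
          rw [mul_assoc, ← ENNReal.ofReal_mul (by positivity), ← Real.rpow_add hs, sub_add_cancel]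
      _ ≤ K * ENNReal.ofReal (ℓ ^ (γ - β)) * ENNReal.ofReal (s ^ β) := by
          gcongr K * ENNReal.ofReal ?_ * _
          exact Real.rpow_le_rpow_of_nonpos (zero_lt_one.trans_le hℓ) hℓs (by linarith)
  have hlim : Tendsto (fun ℓ : ℝ => K * ENNReal.ofReal (ℓ ^ (γ - β))) atTop (nhds 0) := by
    have := ENNReal.Tendsto.const_mul (ENNReal.tendsto_ofReal
      (by simpa [neg_sub] using tendsto_rpow_neg_atTop (sub_pos.2 hγβ))) (Or.inr hK)
    rwa [ENNReal.ofReal_zero, mul_zero] at this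
  exact nonpos_iff_eq_zero.1 (ge_of_tendsto hlim ((eventually_ge_atTop 1).mono hle))

lemma countMeas_eq_zero_of_covMeas_eq_zero [Fintype ι] {β : ℝ} (hα : 0 ≤ α) (hαβ : α < β)
    (h : covMeas α A = 0) : countMeas β A = 0 :=
  let ⟨_, hK, hN⟩ := exists_encard_floorSet_inter_cube_le_of_covMeas_eq_zero hα h
  countMeas_eq_zero_of_encard_le hαβ hK hN

lemma countMeas_card_add_one [Fintype ι] (A : Set (EuclideanSpace ℝ ι)) :
    countMeas (Fintype.card ι + 1) A = 0 := by
  refine countMeas_eq_zero_of_encard_le (lt_add_one _) ENNReal.ofReal_ne_top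
    (K := ENNReal.ofReal (2 ^ Fintype.card ι)) fun s hs a => ?_
  refine (encard_floorSet_inter_cube_le A a (by linarith)).trans ?_
  rw [← ENNReal.ofReal_mul (by positivity), Real.rpow_natCast, ← mul_pow]
  exact ENNReal.ofReal_le_ofReal (pow_le_pow_left₀ (by linarith) (by linarith) _)

end CountingLeCovering

lemma csInf_eq_csInf_of_forall_lt_mem {S T : Set ℝ} (hS : S.Nonempty) (hT : BddBelow T)
    (hST : S ⊆ T) (hTS : ∀ α ∈ T, ∀ β, α < β → β ∈ S) : sInf T = sInf S :=
  le_antisymm (csInf_le_csInf hT hS hST) <| le_csInf (hS.mono hST) fun α hα =>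
    le_of_forall_gt_imp_ge_of_dense fun β hβ => csInf_le (hT.mono hST) (hTS α hα β hβ)

/-- The covering dimension coincides with the counting dimension. -/
theorem stmt_5 (d : ℕ) (A : Set (EuclideanSpace ℝ (Fin d))) :
    covdim A = cdim A :=
  csInf_eq_csInf_of_forall_lt_mem ⟨_, by positivity, countMeas_card_add_one A⟩
    ⟨0, fun _ h => h.1⟩ (fun _ ⟨hα, h⟩ => ⟨hα, covMeas_eq_zero_of_countMeas_eq_zero hα h⟩)
    fun _ ⟨hα, h⟩ _ hαβ => ⟨hα.trans hαβ.le, countMeas_eq_zero_of_covMeas_eq_zero hα hαβ h⟩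
end

section
/- For all d, k ≥ 1, K ≥ 1 and M ≥ 0, there exists a constant c = c(k,d,K,M) > 0 such that for every metrically bounded set B ⊆ ℝ^k and every (K,M)-quasi-isometric embedding f : B → ℝ^d, one has |⌊B⌋| ≤ c · |⌊f(B)⌋|, where |·| denotes cardinality (both sets being finite since B is bounded). -/
/-!
Cover `⌊B⌋` by the sets `⌊{x ∈ B | ⌊f x⌋ = q}⌋`, `q ∈ ⌊f(B)⌋`.
Two points `x, y ∈ B` with the same `q` have `|f x - f y| ≤ 2√d`, so the lower
quasi-isometry bound gives `|x - y| ≤ K (2√d + M)`, and their floors lie within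
`R = K (2√d + M) + 2√k` of each other. A set of integer points of diameter at most `R` has at
most `(2⌈R⌉ + 1)^k` elements, hence `|⌊B⌋| ≤ (2⌈R⌉ + 1)^k |⌊f(B)⌋|`; boundedness of `B` makes
`⌊f(B)⌋` finite.
-/

open Set MeasureTheory Filter
open scoped ENNReal NNReal

noncomputable section

variable {ι : Type*} [Fintype ι]

/-- `f` is a `(K,M)`-quasi-isometric embedding of `B` (with the Euclidean metrics). -/
def QIEOn {ι κ : Type*} [Fintype ι] [Fintype κ] (K M : ℝ) (B : Set (EuclideanSpace ℝ ι))
    (f : EuclideanSpace ℝ ι → EuclideanSpace ℝ κ) : Prop :=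
  ∀ x₁ ∈ B, ∀ x₂ ∈ B,
    (1 / K) * dist x₁ x₂ - M ≤ dist (f x₁) (f x₂) ∧ dist (f x₁) (f x₂) ≤ K * dist x₁ x₂ + M

end

lemma Set.Finite.ncard_biUnion_le_mul {α β : Type*} {t : Set β} (ht : t.Finite)
    {s : β → Set α} {n : ℕ} (hs : ∀ q ∈ t, (s q).ncard ≤ n) :
    (⋃ q ∈ t, s q).ncard ≤ n * t.ncard := by
  calc (⋃ q ∈ t, s q).ncard = (⋃ q ∈ ht.toFinset, s q).ncard := by simp
    _ ≤ ∑ q ∈ ht.toFinset, (s q).ncard := ht.toFinset.set_ncard_biUnion_le s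
    _ ≤ ht.toFinset.card • n := Finset.sum_le_card_nsmul _ _ _ (by simpa using hs)
    _ = n * t.ncard := by rw [smul_eq_mul, mul_comm, Set.ncard_eq_toFinset_card t ht]

lemma Set.image_eq_biUnion_image_fiber {α β γ : Type*} (s : Set α) (g : α → β) (h : α → γ) :
    h '' s = ⋃ q ∈ g '' s, h '' {x ∈ s | g x = q} := by
  ext p
  simp only [Set.mem_image, Set.mem_iUnion, exists_prop]
  constructor
  · rintro ⟨x, hx, rfl⟩
    exact ⟨g x, ⟨x, hx, rfl⟩, x, ⟨hx, rfl⟩, rfl⟩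
  · rintro ⟨_, -, x, ⟨hx, -⟩, rfl⟩
    exact ⟨x, hx, rfl⟩

section Lattice

variable {ι : Type*}

lemma floorPt_floorPt (x : EuclideanSpace ℝ ι) : floorPt (floorPt x) = floorPt x := by
  ext i
  simp [floorPt]

lemma floorPt_eq_self_of_mem_floorSet {A : Set (EuclideanSpace ℝ ι)} {p : EuclideanSpace ℝ ι}
    (hp : p ∈ floorSet A) : floorPt p = p := by
  obtain ⟨x, -, rfl⟩ := hp
  exact floorPt_floorPt x

lemma injOn_floor_sub {S : Set (EuclideanSpace ℝ ι)} (hS : ∀ p ∈ S, floorPt p = p)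
    (p₀ : EuclideanSpace ℝ ι) : InjOn (fun p i => ⌊p i⌋ - ⌊p₀ i⌋) S := by
  intro p hp q hq hpq
  have hfloor (i : ι) : ⌊p i⌋ = ⌊q i⌋ := by simpa using congrFun hpq i
  rw [← hS p hp, ← hS q hq]
  simp only [floorPt, hfloor]

variable [Fintype ι]

lemma dist_floorPt_le (x : EuclideanSpace ℝ ι) :
    dist x (floorPt x) ≤ √(Fintype.card ι) := by
  rw [EuclideanSpace.dist_eq]
  gcongr
  calc ∑ i, dist (x i) (floorPt x i) ^ 2 ≤ ∑ _i : ι, (1 : ℝ) := by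
        gcongr with i
        have h : dist (x i) (floorPt x i) = Int.fract (x i) := by
          rw [Real.dist_eq, show floorPt x i = ⌊x i⌋ from rfl, Int.self_sub_floor,
            abs_of_nonneg (Int.fract_nonneg _)]
        rw [h]
        nlinarith [Int.fract_nonneg (x i), Int.fract_lt_one (x i)]
    _ = Fintype.card ι := by simp

lemma dist_floorPt_floorPt_le (x y : EuclideanSpace ℝ ι) :
    dist (floorPt x) (floorPt y) ≤ dist x y + 2 * √(Fintype.card ι) := by
  calc dist (floorPt x) (floorPt y) ≤ dist (floorPt x) x + dist x y + dist y (floorPt y) :=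
        dist_triangle4 _ _ _ _
    _ ≤ dist x y + 2 * √(Fintype.card ι) := by
        rw [dist_comm (floorPt x)]
        linarith [dist_floorPt_le x, dist_floorPt_le y]

lemma dist_le_of_floorPt_eq {x y : EuclideanSpace ℝ ι} (h : floorPt x = floorPt y) :
    dist x y ≤ 2 * √(Fintype.card ι) := by
  calc dist x y ≤ dist x (floorPt x) + dist (floorPt y) y := by
        rw [h]; exact dist_triangle _ _ _
    _ ≤ 2 * √(Fintype.card ι) := by
        rw [dist_comm (floorPt y)]
        linarith [dist_floorPt_le x, dist_floorPt_le y]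

lemma floor_sub_mem_piFinset [DecidableEq ι] {p p₀ : EuclideanSpace ℝ ι} (hp : floorPt p = p)
    (hp₀ : floorPt p₀ = p₀) {R : ℝ} (hR : dist p p₀ ≤ R) :
    (fun i => ⌊p i⌋ - ⌊p₀ i⌋) ∈
      Fintype.piFinset fun _ : ι => Finset.Icc (-(⌈R⌉₊ : ℤ)) ⌈R⌉₊ := by
  rw [Fintype.mem_piFinset]
  intro i
  have hcoord (v : EuclideanSpace ℝ ι) (hv : floorPt v = v) : ((⌊v i⌋ : ℤ) : ℝ) = v i :=
    congrFun (congrArg WithLp.ofLp hv) i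
  have hdist : |((⌊p i⌋ - ⌊p₀ i⌋ : ℤ) : ℝ)| ≤ ⌈R⌉₊ := by
    push_cast
    rw [hcoord p hp, hcoord p₀ hp₀, ← Real.dist_eq]
    exact (PiLp.dist_apply_le p p₀ i).trans (hR.trans (Nat.le_ceil R))
  rw [Finset.mem_Icc, ← abs_le]
  exact_mod_cast hdist

variable {S : Set (EuclideanSpace ℝ ι)} {R : ℝ}

lemma finite_of_forall_dist_le (hS : ∀ p ∈ S, floorPt p = p)
    (hR : ∀ p ∈ S, ∀ q ∈ S, dist p q ≤ R) : S.Finite := by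
  classical
  rcases S.eq_empty_or_nonempty with rfl | ⟨p₀, hp₀⟩
  · exact Set.finite_empty
  exact Set.Finite.of_injOn
    (fun p hp => floor_sub_mem_piFinset (hS p hp) (hS p₀ hp₀) (hR p hp p₀ hp₀))
    (injOn_floor_sub hS p₀) (Finset.finite_toSet _)

lemma ncard_le_of_forall_dist_le (hS : ∀ p ∈ S, floorPt p = p)
    (hR : ∀ p ∈ S, ∀ q ∈ S, dist p q ≤ R) :
    S.ncard ≤ (2 * ⌈R⌉₊ + 1) ^ Fintype.card ι := by
  classical
  rcases S.eq_empty_or_nonempty with rfl | ⟨p₀, hp₀⟩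
  · simp
  calc S.ncard
      ≤ (↑(Fintype.piFinset fun _ : ι => Finset.Icc (-(⌈R⌉₊ : ℤ)) ⌈R⌉₊) : Set (ι → ℤ)).ncard :=
        Set.ncard_le_ncard_of_injOn _
          (fun p hp => floor_sub_mem_piFinset (hS p hp) (hS p₀ hp₀) (hR p hp p₀ hp₀))
          (injOn_floor_sub hS p₀) (Finset.finite_toSet _)
    _ = (2 * ⌈R⌉₊ + 1) ^ Fintype.card ι := by
        rw [Set.ncard_coe_finset, Fintype.card_piFinset, Finset.prod_const, Finset.card_univ,
          Int.card_Icc]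
        congr 1
        omega

lemma Bornology.IsBounded.floorSet_finite {A : Set (EuclideanSpace ℝ ι)}
    (hA : Bornology.IsBounded A) : (floorSet A).Finite := by
  obtain ⟨C, hC⟩ := Metric.isBounded_iff.mp hA
  refine finite_of_forall_dist_le (R := C + 2 * √(Fintype.card ι))
    (fun p hp => floorPt_eq_self_of_mem_floorSet hp) ?_
  rintro _ ⟨x, hx, rfl⟩ _ ⟨y, hy, rfl⟩
  linarith [dist_floorPt_floorPt_le x y, hC hx hy]

end Lattice

section QuasiIsometry

variable {ι κ : Type*} [Fintype ι] [Fintype κ] {K M : ℝ} {B : Set (EuclideanSpace ℝ ι)}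
  {f : EuclideanSpace ℝ ι → EuclideanSpace ℝ κ}

lemma QIEOn.isBounded_image (hf : QIEOn K M B f) (hK : 0 ≤ K) (hB : Bornology.IsBounded B) :
    Bornology.IsBounded (f '' B) := by
  obtain ⟨C, hC⟩ := Metric.isBounded_iff.mp hB
  refine Metric.isBounded_iff.mpr ⟨K * C + M, ?_⟩
  rintro _ ⟨x, hx, rfl⟩ _ ⟨y, hy, rfl⟩
  calc dist (f x) (f y) ≤ K * dist x y + M := (hf x hx y hy).2
    _ ≤ K * C + M := by gcongr; exact hC hx hy

lemma QIEOn.dist_le (hf : QIEOn K M B f) (hK : 0 < K) {x y : EuclideanSpace ℝ ι} (hx : x ∈ B)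
    (hy : y ∈ B) : dist x y ≤ K * (dist (f x) (f y) + M) := by
  have h := (hf x hx y hy).1
  rw [one_div, ← div_eq_inv_mul, sub_le_iff_le_add, div_le_iff₀ hK] at h
  linarith

lemma QIEOn.dist_le_of_mem_floorSet_fiber (hf : QIEOn K M B f) (hK : 0 < K)
    {q : EuclideanSpace ℝ κ} {p p' : EuclideanSpace ℝ ι}
    (hp : p ∈ floorSet {x ∈ B | floorPt (f x) = q})
    (hp' : p' ∈ floorSet {x ∈ B | floorPt (f x) = q}) :
    dist p p' ≤ K * (2 * √(Fintype.card κ) + M) + 2 * √(Fintype.card ι) := by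
  obtain ⟨x, ⟨hx, hxq⟩, rfl⟩ := hp
  obtain ⟨y, ⟨hy, hyq⟩, rfl⟩ := hp'
  have hfxy : dist (f x) (f y) ≤ 2 * √(Fintype.card κ) :=
    dist_le_of_floorPt_eq (hxq.trans hyq.symm)
  calc dist (floorPt x) (floorPt y) ≤ dist x y + 2 * √(Fintype.card ι) :=
        dist_floorPt_floorPt_le x y
    _ ≤ K * (2 * √(Fintype.card κ) + M) + 2 * √(Fintype.card ι) := by
        gcongr
        exact (hf.dist_le hK hx hy).trans (by gcongr)

lemma QIEOn.ncard_floorSet_le (hf : QIEOn K M B f) (hK : 0 < K) (hB : Bornology.IsBounded B) :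
    (floorSet B).ncard ≤
      (2 * ⌈K * (2 * √(Fintype.card κ) + M) + 2 * √(Fintype.card ι)⌉₊ + 1) ^ Fintype.card ι *
        (floorSet (f '' B)).ncard := by
  have hcover : floorSet B = ⋃ q ∈ floorSet (f '' B), floorSet {x ∈ B | floorPt (f x) = q} := by
    simpa only [floorSet, Set.image_image] using
      Set.image_eq_biUnion_image_fiber B (fun x => floorPt (f x)) floorPt
  rw [hcover]
  refine ((hf.isBounded_image hK.le hB).floorSet_finite).ncard_biUnion_le_mul fun q _ => ?_
  exact ncard_le_of_forall_dist_le (fun p hp => floorPt_eq_self_of_mem_floorSet hp)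
    fun p hp p' hp' => hf.dist_le_of_mem_floorSet_fiber hK hp hp'

end QuasiIsometry

theorem stmt_6_general (k d : ℕ) (K M : ℝ) (hK : 1 ≤ K) :
    ∃ c > (0 : ℝ), ∀ (B : Set (EuclideanSpace ℝ (Fin k)))
      (f : EuclideanSpace ℝ (Fin k) → EuclideanSpace ℝ (Fin d)),
      Bornology.IsBounded B → QIEOn K M B f →
      ((floorSet B).ncard : ℝ) ≤ c * ((floorSet (f '' B)).ncard : ℝ) := by
  refine ⟨(2 * ⌈K * (2 * √d + M) + 2 * √k⌉₊ + 1) ^ k, by positivity, fun B f hB hf => ?_⟩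
  have h := hf.ncard_floorSet_le (by linarith) hB
  simp only [Fintype.card_fin] at h
  exact_mod_cast h

/-- For bounded `B ⊆ ℝ^k` and `(K,M)`-quasi-isometric embeddings `f : B → ℝ^d`, the
cardinality of `⌊B⌋` is bounded by a constant (depending only on `k, d, K, M`) times the
cardinality of `⌊f(B)⌋`. -/
theorem stmt_6 (k d : ℕ) (hk : 1 ≤ k) (hd : 1 ≤ d) (K M : ℝ) (hK : 1 ≤ K) (hM : 0 ≤ M) :
    ∃ c > (0 : ℝ), ∀ (B : Set (EuclideanSpace ℝ (Fin k)))
      (f : EuclideanSpace ℝ (Fin k) → EuclideanSpace ℝ (Fin d)),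
      Bornology.IsBounded B → QIEOn K M B f →
      ((floorSet B).ncard : ℝ) ≤ c * ((floorSet (f '' B)).ncard : ℝ) :=
  stmt_6_general k d K M hK
end

section
/- Let R ⊆ ℝ^k be a linear subspace and T : R → ℝ^d an injective linear transformation (so T : R → T(R) is invertible), and set K = max(∥T∥, ∥T⁻¹∥) where ∥·∥ is the operator norm. For all α ≥ 0, there is a constant c = c(α,k,d,K) ≥ 1 such that for every A ⊆ R, C^α(A) ≤ c·C^α(T(A)) and C^α(T(A)) ≤ c·C^α(A). In particular, A is α-counting regular if and only if T(A) is α-counting regular, and cdim(A) = cdim(T(A)). The same conclusions hold for the mass measures M^α and the mass dimension mdim. -/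
open Set MeasureTheory Filter
open scoped ENNReal NNReal

noncomputable section

variable {ι : Type*} [Fintype ι]

/-! For every lattice point `b` of `⌊A⌋` choose `p ∈ A` with `⌊p⌋ = b` and send `b` to `⌊T p⌋`.
Since `T` is `K`-bi-Lipschitz, this map moves distances by a factor `K` up to an additive
error: points with the same image are within a fixed distance of each other, so each fibre
contains at most `m` lattice points, and a cube of side `s ≥ 1` (or the centred cube `[-s, s)^k`)
is mapped into a cube (a centred cube) of side `λ s`. Hence `|⌊A⌋ ∩ C| ≤ m |⌊T A⌋ ∩ C'|` with
`‖C'‖ = λ ‖C‖`, so `C^α(A) ≤ m λ^α C^α(T A)`, and symmetrically with `T⁻¹`. The statements about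
regularity and dimension follow because these comparisons hold at every exponent. -/

theorem encard_le_mul_encard_of_mapsTo {α β : Type*} {s : Set α} {t : Set β} {f : α → β}
    (hf : MapsTo f s t) {m : ℕ} (hfib : ∀ y ∈ t, (s ∩ f ⁻¹' {y}).encard ≤ m) :
    s.encard ≤ m * t.encard := by
  rcases eq_or_ne m 0 with rfl | hm
  · suffices s = ∅ by simp [this]
    refine eq_empty_of_forall_notMem fun x hx => ?_
    have := hfib (f x) (hf hx)
    simp only [Nat.cast_zero, nonpos_iff_eq_zero, encard_eq_zero] at this
    exact this.subset ⟨hx, rfl⟩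
  rcases t.finite_or_infinite with ht | ht
  · have hcover : s ⊆ ⋃ y ∈ ht.toFinset, s ∩ f ⁻¹' {y} := fun x hx =>
      mem_biUnion (ht.mem_toFinset.2 (hf hx)) ⟨hx, rfl⟩
    calc s.encard ≤ (⋃ y ∈ ht.toFinset, s ∩ f ⁻¹' {y}).encard := encard_le_encard hcover
      _ ≤ ∑ y ∈ ht.toFinset, (s ∩ f ⁻¹' {y}).encard := Finset.set_encard_biUnion_le _ _
      _ ≤ ∑ _y ∈ ht.toFinset, (m : ℕ∞) :=
          Finset.sum_le_sum fun y hy => hfib y (ht.mem_toFinset.1 hy)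
      _ = m * t.encard := by
          rw [Finset.sum_const, nsmul_eq_mul, mul_comm, ht.encard_eq_coe_toFinset_card]
  · rw [ht.encard_eq, ENat.mul_top (by exact_mod_cast hm)]
    exact le_top

theorem norm_le_sqrt_card_mul {x : EuclideanSpace ℝ ι} {M : ℝ} (hM : 0 ≤ M)
    (hx : ∀ i, |x i| ≤ M) : ‖x‖ ≤ √(Fintype.card ι) * M := by
  rw [EuclideanSpace.norm_eq, ← Real.sqrt_sq hM, ← Real.sqrt_mul (Nat.cast_nonneg _)]
  gcongr
  calc ∑ i, ‖x i‖ ^ 2 ≤ ∑ _i : ι, M ^ 2 :=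
        Finset.sum_le_sum fun i _ => by
          rw [Real.norm_eq_abs, sq_abs]
          exact sq_le_sq' (abs_le.1 (hx i)).1 (abs_le.1 (hx i)).2
    _ = Fintype.card ι * M ^ 2 := by simp

theorem norm_floorPt_sub_le (x : EuclideanSpace ℝ ι) :
    ‖floorPt x - x‖ ≤ √(Fintype.card ι) := by
  simpa using norm_le_sqrt_card_mul zero_le_one fun i => by
    have h1 := Int.floor_le (x i)
    have h2 := Int.lt_floor_add_one (x i)
    simp only [floorPt, PiLp.sub_apply]
    rw [abs_le]
    constructor <;> linarith

theorem norm_sub_le_norm_floorPt_sub_add (x y : EuclideanSpace ℝ ι) :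
    ‖x - y‖ ≤ ‖floorPt x - floorPt y‖ + 2 * √(Fintype.card ι) := by
  linarith [norm_sub_le_norm_sub_add_norm_sub x (floorPt x) y,
    norm_sub_le_norm_sub_add_norm_sub (floorPt x) (floorPt y) y, norm_sub_rev x (floorPt x),
    norm_floorPt_sub_le x, norm_floorPt_sub_le y]

theorem norm_floorPt_sub_floorPt_le (x y : EuclideanSpace ℝ ι) :
    ‖floorPt x - floorPt y‖ ≤ ‖x - y‖ + 2 * √(Fintype.card ι) := by
  linarith [norm_sub_le_norm_sub_add_norm_sub (floorPt x) x (floorPt y),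
    norm_sub_le_norm_sub_add_norm_sub x y (floorPt y), norm_sub_rev y (floorPt y),
    norm_floorPt_sub_le x, norm_floorPt_sub_le y]

theorem norm_floorPt_le (x : EuclideanSpace ℝ ι) :
    ‖floorPt x‖ ≤ ‖x‖ + √(Fintype.card ι) := by
  linarith [norm_le_insert' (floorPt x) x, norm_floorPt_sub_le x]

theorem norm_le_norm_floorPt_add (x : EuclideanSpace ℝ ι) :
    ‖x‖ ≤ ‖floorPt x‖ + √(Fintype.card ι) := by
  linarith [norm_le_insert' x (floorPt x), norm_sub_rev x (floorPt x), norm_floorPt_sub_le x]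

theorem abs_apply_le_norm (x : EuclideanSpace ℝ ι) (i : ι) : |x i| ≤ ‖x‖ := by
  simpa only [Real.norm_eq_abs] using PiLp.norm_apply_le x i

theorem norm_sub_le_of_mem_cube {a x y : EuclideanSpace ℝ ι} {s : ℝ} (hs : 0 ≤ s)
    (hx : x ∈ cube a s) (hy : y ∈ cube a s) : ‖x - y‖ ≤ √(Fintype.card ι) * s :=
  norm_le_sqrt_card_mul hs fun i => by
    obtain ⟨⟨hx₁, hx₂⟩, ⟨hy₁, hy₂⟩⟩ := And.intro (hx i) (hy i)
    rw [PiLp.sub_apply, abs_le]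
    constructor <;> linarith

theorem norm_le_of_mem_centeredCube {x : EuclideanSpace ℝ ι} {ℓ : ℝ} (hℓ : 0 ≤ ℓ)
    (hx : x ∈ centeredCube ℓ) : ‖x‖ ≤ √(Fintype.card ι) * ℓ :=
  norm_le_sqrt_card_mul hℓ fun i => by
    obtain ⟨h₁, h₂⟩ := hx i
    simp only at h₁ h₂
    rw [abs_le]
    constructor <;> linarith

theorem mem_cube_of_norm_sub_le {x c : EuclideanSpace ℝ ι} {D s : ℝ} (hx : ‖x - c‖ ≤ D)
    (hs : 2 * D < s) : x ∈ cube (WithLp.toLp 2 fun i => c i - D) s := fun i => by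
  have := abs_le.1 ((abs_apply_le_norm (x - c) i).trans hx)
  simp only [PiLp.sub_apply] at this
  constructor <;> simp only <;> linarith

theorem mem_centeredCube_of_norm_lt {x : EuclideanSpace ℝ ι} {ℓ : ℝ} (hx : ‖x‖ < ℓ) :
    x ∈ centeredCube ℓ := fun i => by
  have := abs_lt.1 ((abs_apply_le_norm x i).trans_lt hx)
  constructor <;> simp only <;> linarith

theorem encard_range_floorPt_inter_closedBall_le (c : EuclideanSpace ℝ ι) (r : ℝ) :
    (range floorPt ∩ Metric.closedBall c r).encard ≤ ((2 * ⌈r⌉₊ + 1) ^ Fintype.card ι : ℕ) := by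
  classical
  set box : Finset (ι → ℤ) := Fintype.piFinset fun i => Finset.Icc ⌈c i - r⌉ ⌊c i + r⌋
  have hsub : range floorPt ∩ Metric.closedBall c r ⊆
      (fun z : ι → ℤ => (WithLp.toLp 2 fun i => (z i : ℝ) : EuclideanSpace ℝ ι)) '' box := by
    rintro _ ⟨⟨x, rfl⟩, hx⟩
    rw [Metric.mem_closedBall, dist_eq_norm] at hx
    refine ⟨fun i => ⌊x i⌋, Fintype.mem_piFinset.2 fun i => ?_, rfl⟩
    have := abs_le.1 ((abs_apply_le_norm _ i).trans hx)
    simp only [PiLp.sub_apply, floorPt] at this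
    exact Finset.mem_Icc.2 ⟨Int.ceil_le.2 (by linarith), Int.le_floor.2 (by linarith)⟩
  have hbox : box.card ≤ (2 * ⌈r⌉₊ + 1) ^ Fintype.card ι := by
    rw [Fintype.card_piFinset, ← Finset.card_univ, ← Finset.prod_const]
    refine Finset.prod_le_prod' fun i _ => ?_
    rw [Int.card_Icc, Int.toNat_le]
    have : ⌊c i + r⌋ - ⌈c i - r⌉ ≤ 2 * (⌈r⌉₊ : ℤ) := by
      have : ((⌊c i + r⌋ - ⌈c i - r⌉ : ℤ) : ℝ) ≤ 2 * (⌈r⌉₊ : ℝ) := by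
        push_cast
        linarith [Int.floor_le (c i + r), Int.le_ceil (c i - r), Nat.le_ceil r]
      exact_mod_cast this
    push_cast
    omega
  calc (range floorPt ∩ Metric.closedBall c r).encard ≤ (box : Set (ι → ℤ)).encard :=
        (encard_le_encard hsub).trans (encard_image_le _ _)
    _ ≤ _ := by rw [encard_coe_eq_coe_finsetCard]; exact_mod_cast hbox

theorem encard_le_mul_encard_of_fiber_dist_le {β : Type*} {S : Set (EuclideanSpace ℝ ι)}
    (hS : S ⊆ range floorPt) {t : Set β} {g : EuclideanSpace ℝ ι → β} (hg : MapsTo g S t)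
    {r : ℝ} (hr : ∀ b ∈ S, ∀ b' ∈ S, g b = g b' → ‖b - b'‖ ≤ r) :
    S.encard ≤ ((2 * ⌈r⌉₊ + 1) ^ Fintype.card ι : ℕ) * t.encard := by
  refine encard_le_mul_encard_of_mapsTo hg fun y _ => ?_
  rcases (S ∩ g ⁻¹' {y}).eq_empty_or_nonempty with h | ⟨b₀, hb₀, hgb₀⟩
  · simp [h]
  refine (encard_le_encard ?_).trans (encard_range_floorPt_inter_closedBall_le b₀ r)
  rintro b ⟨hb, hgb⟩
  refine ⟨hS hb, ?_⟩
  rw [Metric.mem_closedBall, dist_eq_norm]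
  exact hr b hb b₀ hb₀ (hgb.trans hgb₀.symm)

section CoarseMaps

variable {κ : Type*} [Fintype κ]
variable {S : Set (EuclideanSpace ℝ ι)} {g : EuclideanSpace ℝ ι → EuclideanSpace ℝ κ} {L M : ℝ}

theorem exists_mapsTo_cube_of_norm_sub_le (hL : 0 ≤ L) (hM : 0 ≤ M)
    (hg : ∀ b ∈ S, ∀ b' ∈ S, ‖g b - g b'‖ ≤ L * ‖b - b'‖ + M) (a : EuclideanSpace ℝ ι) {s : ℝ}
    (hs : 1 ≤ s) : ∃ a', MapsTo g (S ∩ cube a s)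
      (cube a' ((2 * L * √(Fintype.card ι) + 2 * M + 1) * s)) := by
  rcases (S ∩ cube a s).eq_empty_or_nonempty with h | ⟨b₀, hb₀S, hb₀⟩
  · exact ⟨0, h ▸ mapsTo_empty _ _⟩
  refine ⟨_, fun b ⟨hbS, hb⟩ => mem_cube_of_norm_sub_le (c := g b₀)
    (D := L * (√(Fintype.card ι) * s) + M) ?_ ?_⟩
  · exact (hg b hbS b₀ hb₀S).trans (by gcongr; exact norm_sub_le_of_mem_cube (by linarith) hb hb₀)
  · have : 0 ≤ L * √(Fintype.card ι) := by positivity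
    nlinarith

theorem mapsTo_centeredCube_of_norm_le (hL : 0 ≤ L) (hM : 0 ≤ M)
    (hg : ∀ b ∈ S, ‖g b‖ ≤ L * ‖b‖ + M) {ℓ : ℝ} (hℓ : 1 ≤ ℓ) : MapsTo g (S ∩ centeredCube ℓ)
      (centeredCube ((2 * L * √(Fintype.card ι) + 2 * M + 1) * ℓ)) := by
  rintro b ⟨hbS, hb⟩
  refine mem_centeredCube_of_norm_lt ((hg b hbS).trans_lt ?_)
  have hb_norm := norm_le_of_mem_centeredCube (by linarith) hb
  have : 0 ≤ L * √(Fintype.card ι) := by positivity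
  nlinarith

end CoarseMaps

theorem div_ofReal_rpow_le_of_encard_le {X Y : ℕ∞} {m : ℕ} (h : X ≤ m * Y) (α : ℝ) {lam s : ℝ}
    (hlam : 0 < lam) (hs : 0 < s) :
    (X : ℝ≥0∞) / ENNReal.ofReal (s ^ α) ≤
      m * ENNReal.ofReal (lam ^ α) * (Y / ENNReal.ofReal ((lam * s) ^ α)) := by
  have hlam_ne : ENNReal.ofReal (lam ^ α) ≠ 0 := by positivity
  rw [Real.mul_rpow hlam.le hs.le, ENNReal.ofReal_mul (by positivity), mul_assoc, ← mul_div_assoc,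
    ENNReal.mul_div_mul_left _ _ hlam_ne ENNReal.ofReal_ne_top, ← mul_div_assoc]
  gcongr
  exact_mod_cast h

section Comparison

variable {σ τ : Type*} {A : Set (EuclideanSpace ℝ σ)} {B : Set (EuclideanSpace ℝ τ)}

theorem countMeas_le_of_encard_cube_le (α : ℝ) (m : ℕ) {lam : ℝ} (hlam : 1 ≤ lam)
    (h : ∀ a s, 1 ≤ s → ∃ a', (floorSet A ∩ cube a s).encard ≤
      m * (floorSet B ∩ cube a' (lam * s)).encard) :
    countMeas α A ≤ m * ENNReal.ofReal (lam ^ α) * countMeas α B := by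
  rw [countMeas, countMeas, ENNReal.mul_iInf fun h => absurd h (by finiteness)]
  refine le_iInf fun ℓ => iInf_le_of_le (max ℓ 1) (iSup₂_le fun a s => iSup_le fun hs => ?_)
  obtain ⟨a', ha'⟩ := h a s ((le_max_right ℓ 1).trans hs.1)
  have hlam_s : ℓ ≤ lam * s ∧ 0 < lam * s := by
    constructor <;> nlinarith [le_max_left ℓ 1, le_max_right ℓ 1, hs.1]
  refine (div_ofReal_rpow_le_of_encard_le ha' α (by linarith) hs.2).trans (mul_le_mul_right ?_ _)
  apply le_iSup_of_le a'
  exact le_iSup₂_of_le (lam * s) hlam_s le_rfl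

theorem massMeas_le_of_encard_centeredCube_le (α : ℝ) (m : ℕ) {lam : ℝ} (hlam : 1 ≤ lam)
    (h : ∀ ℓ, 1 ≤ ℓ → (floorSet A ∩ centeredCube ℓ).encard ≤
      m * (floorSet B ∩ centeredCube (lam * ℓ)).encard) :
    massMeas α A ≤ m * ENNReal.ofReal (lam ^ α) * massMeas α B := by
  rw [massMeas, massMeas, ENNReal.mul_iInf fun h => absurd h (by finiteness)]
  refine le_iInf fun L => iInf_le_of_le (max L 1) (iSup₂_le fun ℓ hℓ => ?_)
  have hlam_ℓ : L ≤ lam * ℓ ∧ 0 < lam * ℓ := by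
    constructor <;> nlinarith [le_max_left L 1, le_max_right L 1, hℓ.1]
  have h2ℓ : 0 < 2 * ℓ := by linarith [hℓ.2]
  have := div_ofReal_rpow_le_of_encard_le (h ℓ ((le_max_right L 1).trans hℓ.1)) α
    (zero_lt_one.trans_le hlam) h2ℓ
  rw [mul_left_comm] at this
  refine this.trans (mul_le_mul_right ?_ _)
  exact le_iSup₂_of_le (lam * ℓ) hlam_ℓ le_rfl

end Comparison

section Transfer

variable {κ : Type*} [Fintype κ]
variable {P : Type*} {u : P → EuclideanSpace ℝ ι} {v : P → EuclideanSpace ℝ κ} {K : ℝ}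

theorem exists_floorSet_transfer (hK : 0 ≤ K) (hvu : ∀ p q, ‖v p - v q‖ ≤ K * ‖u p - u q‖)
    (huv : ∀ p q, ‖u p - u q‖ ≤ K * ‖v p - v q‖) (hv : ∀ p, ‖v p‖ ≤ K * ‖u p‖) (A : Set P) :
    ∃ g : EuclideanSpace ℝ ι → EuclideanSpace ℝ κ,
      MapsTo g (floorSet (u '' A)) (floorSet (v '' A)) ∧
      (∀ b ∈ floorSet (u '' A), ∀ b' ∈ floorSet (u '' A), g b = g b' →
        ‖b - b'‖ ≤ 2 * K * √(Fintype.card κ) + 2 * √(Fintype.card ι)) ∧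
      (∀ b ∈ floorSet (u '' A), ∀ b' ∈ floorSet (u '' A),
        ‖g b - g b'‖ ≤ K * ‖b - b'‖ + (2 * K * √(Fintype.card ι) + 2 * √(Fintype.card κ))) ∧
      (∀ b ∈ floorSet (u '' A),
        ‖g b‖ ≤ K * ‖b‖ + (2 * K * √(Fintype.card ι) + 2 * √(Fintype.card κ))) := by
  rcases isEmpty_or_nonempty P with _ | _
  · exact ⟨0, by simp [floorSet, eq_empty_of_isEmpty A]⟩
  have hlift : ∀ b ∈ floorSet (u '' A), ∃ p ∈ A, floorPt (u p) = b := by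
    simp only [floorSet, image_image, mem_image, imp_self, implies_true]
  choose! X hXA hXb using hlift
  refine ⟨fun b => floorPt (v (X b)), fun b hb => ?_, fun b hb b' hb' hbb' => ?_,
    fun b hb b' hb' => ?_, fun b hb => ?_⟩
  · exact mem_image_of_mem _ (mem_image_of_mem _ (hXA b hb))
  · have hv_near : ‖v (X b) - v (X b')‖ ≤ 2 * √(Fintype.card κ) := by
      simpa [show floorPt (v (X b)) = floorPt (v (X b')) from hbb'] using
        norm_sub_le_norm_floorPt_sub_add (v (X b)) (v (X b'))
    calc ‖b - b'‖ = ‖floorPt (u (X b)) - floorPt (u (X b'))‖ := by rw [hXb b hb, hXb b' hb']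
      _ ≤ ‖u (X b) - u (X b')‖ + 2 * √(Fintype.card ι) := norm_floorPt_sub_floorPt_le _ _
      _ ≤ K * ‖v (X b) - v (X b')‖ + 2 * √(Fintype.card ι) := by gcongr; exact huv _ _
      _ ≤ K * (2 * √(Fintype.card κ)) + 2 * √(Fintype.card ι) := by gcongr
      _ = _ := by ring
  · have hu_near := norm_sub_le_norm_floorPt_sub_add (u (X b)) (u (X b'))
    rw [hXb b hb, hXb b' hb'] at hu_near
    calc ‖floorPt (v (X b)) - floorPt (v (X b'))‖
        ≤ ‖v (X b) - v (X b')‖ + 2 * √(Fintype.card κ) := norm_floorPt_sub_floorPt_le _ _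
      _ ≤ K * ‖u (X b) - u (X b')‖ + 2 * √(Fintype.card κ) := by gcongr; exact hvu _ _
      _ ≤ K * (‖b - b'‖ + 2 * √(Fintype.card ι)) + 2 * √(Fintype.card κ) := by gcongr
      _ = _ := by ring
  · have hu_near := norm_le_norm_floorPt_add (u (X b))
    rw [hXb b hb] at hu_near
    calc ‖floorPt (v (X b))‖ ≤ ‖v (X b)‖ + √(Fintype.card κ) := norm_floorPt_le _
      _ ≤ K * ‖u (X b)‖ + √(Fintype.card κ) := by gcongr; exact hv _
      _ ≤ K * (‖b‖ + √(Fintype.card ι)) + √(Fintype.card κ) := by gcongr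
      _ ≤ _ := by nlinarith [Real.sqrt_nonneg (Fintype.card ι), Real.sqrt_nonneg (Fintype.card κ)]

theorem exists_countMeas_massMeas_image_le (hK : 0 ≤ K)
    (hvu : ∀ p q, ‖v p - v q‖ ≤ K * ‖u p - u q‖) (huv : ∀ p q, ‖u p - u q‖ ≤ K * ‖v p - v q‖)
    (hv : ∀ p, ‖v p‖ ≤ K * ‖u p‖) (α : ℝ) :
    ∃ c : ℝ, ∀ A : Set P,
      countMeas α (u '' A) ≤ ENNReal.ofReal c * countMeas α (v '' A) ∧
      massMeas α (u '' A) ≤ ENNReal.ofReal c * massMeas α (v '' A) := by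
  set M := 2 * K * √(Fintype.card ι) + 2 * √(Fintype.card κ)
  set m := (2 * ⌈2 * K * √(Fintype.card κ) + 2 * √(Fintype.card ι)⌉₊ + 1) ^ Fintype.card ι
  set lam := 2 * K * √(Fintype.card ι) + 2 * M + 1
  have hM : 0 ≤ M := by positivity
  have hlam : 1 ≤ lam := by simp only [lam]; nlinarith [Real.sqrt_nonneg (Fintype.card ι)]
  refine ⟨m * lam ^ α, fun A => ?_⟩
  rw [ENNReal.ofReal_mul (Nat.cast_nonneg m), ENNReal.ofReal_natCast]
  obtain ⟨g, hmaps, hfiber, hlip, hnorm⟩ := exists_floorSet_transfer hK hvu huv hv A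
  have hcount {T : Set (EuclideanSpace ℝ κ)} {S : Set (EuclideanSpace ℝ ι)}
      (hS : S ⊆ floorSet (u '' A)) (hST : MapsTo g S T) :
      S.encard ≤ m * (floorSet (v '' A) ∩ T).encard :=
    encard_le_mul_encard_of_fiber_dist_le (t := floorSet (v '' A) ∩ T)
      (hS.trans (image_subset_range _ _))
      (fun b hb => ⟨hmaps (hS hb), hST hb⟩) fun b hb b' hb' => hfiber b (hS hb) b' (hS hb')
  constructor
  · refine countMeas_le_of_encard_cube_le α m hlam fun a s hs => ?_
    obtain ⟨a', ha'⟩ := exists_mapsTo_cube_of_norm_sub_le hK hM hlip a hs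
    exact ⟨a', hcount inter_subset_left ha'⟩
  · exact massMeas_le_of_encard_centeredCube_le α m hlam fun ℓ hℓ =>
      hcount inter_subset_left (mapsTo_centeredCube_of_norm_le hK hM hnorm hℓ)

end Transfer

theorem ENNReal.eq_zero_iff_of_le_mul {x y a b : ℝ≥0∞} (hxy : x ≤ a * y) (hyx : y ≤ b * x) :
    x = 0 ↔ y = 0 :=
  ⟨fun hx => le_antisymm (by simpa [hx] using hyx) zero_le,
    fun hy => le_antisymm (by simpa [hy] using hxy) zero_le⟩

theorem ENNReal.pos_and_lt_top_iff_of_le_mul {x y a b : ℝ≥0∞} (ha : a ≠ ⊤) (hb : b ≠ ⊤)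
    (hxy : x ≤ a * y) (hyx : y ≤ b * x) : (0 < x ∧ x < ⊤) ↔ (0 < y ∧ y < ⊤) := by
  simp only [pos_iff_ne_zero, lt_top_iff_ne_top, ne_eq, eq_zero_iff_of_le_mul hxy hyx]
  refine and_congr_right fun _ => ⟨fun hx => ?_, fun hy => ?_⟩
  · exact ne_top_of_le_ne_top (ENNReal.mul_ne_top hb hx) hyx
  · exact ne_top_of_le_ne_top (ENNReal.mul_ne_top ha hy) hxy

theorem exists_countMeas_massMeas_le_of_linear {k d : ℕ} {K : ℝ}
    {R : Submodule ℝ (EuclideanSpace ℝ (Fin k))} {T : R →ₗ[ℝ] EuclideanSpace ℝ (Fin d)}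
    (hK : ∀ x : R, ‖T x‖ ≤ K * ‖x‖ ∧ ‖x‖ ≤ K * ‖T x‖) (α : ℝ) :
    ∃ c : ℝ, 1 ≤ c ∧ ∀ A : Set R,
      countMeas α (Subtype.val '' A) ≤ ENNReal.ofReal c * countMeas α ((fun x : R => T x) '' A) ∧
      countMeas α ((fun x : R => T x) '' A) ≤ ENNReal.ofReal c * countMeas α (Subtype.val '' A) ∧
      massMeas α (Subtype.val '' A) ≤ ENNReal.ofReal c * massMeas α ((fun x : R => T x) '' A) ∧
      massMeas α ((fun x : R => T x) '' A) ≤ ENNReal.ofReal c * massMeas α (Subtype.val '' A) := by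
  have hK₀ : ∀ x : R, ‖T x‖ ≤ max K 0 * ‖x‖ ∧ ‖x‖ ≤ max K 0 * ‖T x‖ := fun x =>
    ⟨(hK x).1.trans (by gcongr; exact le_max_left _ _),
      (hK x).2.trans (by gcongr; exact le_max_left _ _)⟩
  have hTsub (p q : R) : ‖T p - T q‖ ≤ max K 0 * ‖(p : EuclideanSpace ℝ (Fin k)) - q‖ := by
    simpa only [← map_sub, ← Submodule.coe_sub, Submodule.coe_norm] using (hK₀ (p - q)).1
  have hsubT (p q : R) : ‖(p : EuclideanSpace ℝ (Fin k)) - q‖ ≤ max K 0 * ‖T p - T q‖ := by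
    simpa only [← map_sub, ← Submodule.coe_sub, Submodule.coe_norm] using (hK₀ (p - q)).2
  obtain ⟨c₁, hc₁⟩ := exists_countMeas_massMeas_image_le (le_max_right K 0)
    hTsub hsubT (fun p => (hK₀ p).1) α
  obtain ⟨c₂, hc₂⟩ := exists_countMeas_massMeas_image_le (le_max_right K 0)
    hsubT hTsub (fun p => (hK₀ p).2) α
  have hle₁ : ENNReal.ofReal c₁ ≤ ENNReal.ofReal (max 1 (max c₁ c₂)) := by gcongr; simp
  have hle₂ : ENNReal.ofReal c₂ ≤ ENNReal.ofReal (max 1 (max c₁ c₂)) := by gcongr; simp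
  refine ⟨max 1 (max c₁ c₂), le_max_left _ _, fun A => ⟨?_, ?_, ?_, ?_⟩⟩
  · exact (hc₁ A).1.trans (mul_le_mul_left hle₁ _)
  · exact (hc₂ A).1.trans (mul_le_mul_left hle₂ _)
  · exact (hc₁ A).2.trans (mul_le_mul_left hle₁ _)
  · exact (hc₂ A).2.trans (mul_le_mul_left hle₂ _)

theorem stmt_9_general (k d : ℕ) (α K : ℝ)
    (R : Submodule ℝ (EuclideanSpace ℝ (Fin k)))
    (T : R →ₗ[ℝ] EuclideanSpace ℝ (Fin d))
    (hK : ∀ x : R, ‖T x‖ ≤ K * ‖x‖ ∧ ‖x‖ ≤ K * ‖T x‖) :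
    ∃ c : ℝ, 1 ≤ c ∧ ∀ A : Set R,
      countMeas α (Subtype.val '' A) ≤ ENNReal.ofReal c * countMeas α ((fun x : R => T x) '' A) ∧
      countMeas α ((fun x : R => T x) '' A) ≤ ENNReal.ofReal c * countMeas α (Subtype.val '' A) ∧
      ((0 < countMeas α (Subtype.val '' A) ∧ countMeas α (Subtype.val '' A) < ⊤) ↔
        (0 < countMeas α ((fun x : R => T x) '' A) ∧
          countMeas α ((fun x : R => T x) '' A) < ⊤)) ∧
      cdim (Subtype.val '' A) = cdim ((fun x : R => T x) '' A) ∧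
      massMeas α (Subtype.val '' A) ≤ ENNReal.ofReal c * massMeas α ((fun x : R => T x) '' A) ∧
      massMeas α ((fun x : R => T x) '' A) ≤ ENNReal.ofReal c * massMeas α (Subtype.val '' A) ∧
      ((0 < massMeas α (Subtype.val '' A) ∧ massMeas α (Subtype.val '' A) < ⊤) ↔
        (0 < massMeas α ((fun x : R => T x) '' A) ∧
          massMeas α ((fun x : R => T x) '' A) < ⊤)) ∧
      mdim (Subtype.val '' A) = mdim ((fun x : R => T x) '' A) := by
  have hcomp := exists_countMeas_massMeas_le_of_linear hK
  obtain ⟨c, hc₁, hc⟩ := hcomp α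
  refine ⟨c, hc₁, fun A => ?_⟩
  obtain ⟨hcount₁, hcount₂, hmass₁, hmass₂⟩ := hc A
  have hcount_zero (β : ℝ) :
      countMeas β (Subtype.val '' A) = 0 ↔ countMeas β ((fun x : R => T x) '' A) = 0 := by
    obtain ⟨c', -, hc'⟩ := hcomp β
    exact ENNReal.eq_zero_iff_of_le_mul (hc' A).1 (hc' A).2.1
  have hmass_zero (β : ℝ) :
      massMeas β (Subtype.val '' A) = 0 ↔ massMeas β ((fun x : R => T x) '' A) = 0 := by
    obtain ⟨c', -, hc'⟩ := hcomp β
    exact ENNReal.eq_zero_iff_of_le_mul (hc' A).2.2.1 (hc' A).2.2.2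
  refine ⟨hcount₁, hcount₂,
    ENNReal.pos_and_lt_top_iff_of_le_mul (by simp) (by simp) hcount₁ hcount₂,
    by simp only [cdim, hcount_zero], hmass₁, hmass₂,
    ENNReal.pos_and_lt_top_iff_of_le_mul (by simp) (by simp) hmass₁ hmass₂,
    by simp only [mdim, hmass_zero]⟩

/-- Invariance of the counting and mass measures (up to a constant depending only on
`α, k, d, K`), of regularity, and of the counting and mass dimensions under an injective
linear transformation `T : R → ℝ^d` defined on a linear subspace `R ⊆ ℝ^k`, where `K` bounds
the operator norms of `T` and of its inverse `T⁻¹ : T(R) → R`. -/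
theorem stmt_9 (k d : ℕ) (α K : ℝ) (hα : 0 ≤ α)
    (R : Submodule ℝ (EuclideanSpace ℝ (Fin k)))
    (T : R →ₗ[ℝ] EuclideanSpace ℝ (Fin d))
    (hinj : Function.Injective T)
    (hK : ∀ x : R, ‖T x‖ ≤ K * ‖x‖ ∧ ‖x‖ ≤ K * ‖T x‖) :
    ∃ c : ℝ, 1 ≤ c ∧ ∀ A : Set R,
      countMeas α (Subtype.val '' A) ≤ ENNReal.ofReal c * countMeas α ((fun x : R => T x) '' A) ∧
      countMeas α ((fun x : R => T x) '' A) ≤ ENNReal.ofReal c * countMeas α (Subtype.val '' A) ∧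
      ((0 < countMeas α (Subtype.val '' A) ∧ countMeas α (Subtype.val '' A) < ⊤) ↔
        (0 < countMeas α ((fun x : R => T x) '' A) ∧
          countMeas α ((fun x : R => T x) '' A) < ⊤)) ∧
      cdim (Subtype.val '' A) = cdim ((fun x : R => T x) '' A) ∧
      massMeas α (Subtype.val '' A) ≤ ENNReal.ofReal c * massMeas α ((fun x : R => T x) '' A) ∧
      massMeas α ((fun x : R => T x) '' A) ≤ ENNReal.ofReal c * massMeas α (Subtype.val '' A) ∧
      ((0 < massMeas α (Subtype.val '' A) ∧ massMeas α (Subtype.val '' A) < ⊤) ↔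
        (0 < massMeas α ((fun x : R => T x) '' A) ∧
          massMeas α ((fun x : R => T x) '' A) < ⊤)) ∧
      mdim (Subtype.val '' A) = mdim ((fun x : R => T x) '' A) :=
  stmt_9_general k d α K R T hK

end
end

section
/- Fix d ≥ 2, 1 ≤ k ≤ d−1, and a compact set 𝓜 of real k×(d−k) matrices. There exists a constant c = c(k,d,𝓜) > 0 such that for all z, z' ∈ ℤ^d with z ≠ z', m(𝓜_{z,z'}) ≤ c·|z − z'|^{−k}, where m is Lebesgue measure on the space of k×(d−k) real matrices, |·| is the Euclidean norm on ℝ^d, and 𝓜_{z,z'} = {M ∈ 𝓜 : ⌊P_M z⌋ = ⌊P_M z'⌋}. -/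
/-!
Write `z - z' = (a, b)` with `a ∈ ℤ^k`, `b ∈ ℤ^{d-k}`. Equal floors of `P_M z` and `P_M z'` put
every row `Mᵢ` of `M` in the slab `|aᵢ + ⟨Mᵢ, b⟩| < 1`, and the rows vary independently, so the
measure is a product over the `k` rows. Inside the ball `‖Mᵢ‖ ≤ R` containing `𝓜`, Fubini along
the largest coordinate `b_l` of `b` bounds each slab by `2 / |b_l| · (2R)^{d-k-1}`. Finally
`b ≠ 0`, since otherwise the slab condition forces `a = 0`; and the slab condition also gives
`|aᵢ| ≤ 1 + (d-k) R |b_l|`, so `|z - z'| ≤ C |b_l|` and each factor `1 / |b_l|` is at most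
`C / |z - z'|`.
-/

open Set MeasureTheory Filter
open scoped ENNReal NNReal

noncomputable section

variable {ι : Type*} [Fintype ι]

/-- The oblique projection `P_M : ℝ^d → ℝ^d` (with `ℝ^d = ℝ^k × ℝ^{d-k}` realized via the
index type `Fin k ⊕ Fin m`, `m = d - k`) given by `P_M (x, y) = (x + M y, 0)`. -/
def projMat {k m : ℕ} (M : Fin k → Fin m → ℝ) (x : EuclideanSpace ℝ (Fin k ⊕ Fin m)) :
    EuclideanSpace ℝ (Fin k ⊕ Fin m) :=
  WithLp.toLp 2 (fun j => Sum.elim (fun i => x (Sum.inl i) + ∑ l, M i l * x (Sum.inr l))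
    (fun _ => (0 : ℝ)) j)

/-- The embedding of the lattice `ℤ^d` into `ℝ^d`. -/
def latticeEmbed {k m : ℕ} (z : (Fin k ⊕ Fin m) → ℤ) : EuclideanSpace ℝ (Fin k ⊕ Fin m) :=
  WithLp.toLp 2 (fun i => (z i : ℝ))

/-- The coordinatewise integer floor of a point of `ℝ^d`. -/
def intFloor {k m : ℕ} (x : EuclideanSpace ℝ (Fin k ⊕ Fin m)) : (Fin k ⊕ Fin m) → ℤ :=
  fun i => ⌊x i⌋

open Metric

lemma MeasureTheory.Measure.prod_apply_le_mul_of_slice_le {α β : Type*}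
    [MeasurableSpace α] [MeasurableSpace β]
    {μ : Measure α} {ν : Measure β} [SFinite μ] [SFinite ν] {s : Set (α × β)} {t : Set β}
    (hs : MeasurableSet s) (ht : MeasurableSet t) (hst : ∀ p ∈ s, p.2 ∈ t) {c : ℝ≥0∞}
    (hc : ∀ y ∈ t, μ ((·, y) ⁻¹' s) ≤ c) : μ.prod ν s ≤ c * ν t := by
  rw [Measure.prod_apply_symm hs, ← lintegral_indicator_const ht]
  refine lintegral_mono fun y => ?_
  by_cases hy : y ∈ t
  · simpa [hy] using hc y hy
  · have : (·, y) ⁻¹' s = ∅ := eq_empty_of_forall_notMem fun x hx => hy (hst _ hx)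
    simp [this]

lemma Real.volume_abs_add_mul_lt_one {β c : ℝ} (hc : c ≠ 0) :
    volume {x : ℝ | |β + c * x| < 1} = ENNReal.ofReal (2 / |c|) := by
  have : {x : ℝ | |β + c * x| < 1} = (c * ·) ⁻¹' ball (-β) 1 := by
    ext x; simp [Real.dist_eq, add_comm]
  rw [this, Real.volume_preimage_mul_left hc, Real.volume_ball,
    ← ENNReal.ofReal_mul (abs_nonneg _), abs_inv]
  ring_nf

lemma volume_slab_inter_closedBall_le {n : ℕ} (α : ℝ) (b : Fin n → ℝ) {l : Fin n} (hl : b l ≠ 0)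
    {R : ℝ} (hR : 0 ≤ R) :
    volume ({v : Fin n → ℝ | |α + ∑ j, v j * b j| < 1} ∩ closedBall 0 R) ≤
      ENNReal.ofReal (2 / |b l|) * ENNReal.ofReal ((2 * R) ^ (n - 1)) := by
  cases n with
  | zero => exact l.elim0
  | succ n =>
  set A : Set (ℝ × (Fin n → ℝ)) :=
    {p | |α + b l * p.1 + ∑ j, p.2 j * b (l.succAbove j)| < 1} ∩ Prod.snd ⁻¹' closedBall 0 R
  have hA : MeasurableSet A :=
    (measurableSet_lt (by fun_prop) measurable_const).inter
      (measurableSet_closedBall.preimage measurable_snd)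
  have he := measurePreserving_piFinSuccAbove (fun _ : Fin (n + 1) => (volume : Measure ℝ)) l
  rw [← volume_pi] at he
  have hsub : {v : Fin (n + 1) → ℝ | |α + ∑ j, v j * b j| < 1} ∩ closedBall 0 R ⊆
      MeasurableEquiv.piFinSuccAbove (fun _ => ℝ) l ⁻¹' A := by
    rintro v ⟨hv, hvR⟩
    rw [mem_closedBall_zero_iff, pi_norm_le_iff_of_nonneg hR] at hvR
    refine ⟨?_, mem_closedBall_zero_iff.2 ((pi_norm_le_iff_of_nonneg hR).2 fun j => hvR _)⟩
    simpa [Fin.sum_univ_succAbove _ l, Fin.removeNth_apply, add_assoc, mul_comm] using hv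
  calc _ ≤ volume (MeasurableEquiv.piFinSuccAbove (fun _ => ℝ) l ⁻¹' A) := measure_mono hsub
    _ = (volume : Measure ℝ).prod volume A := by
        rw [he.measure_preimage hA.nullMeasurableSet, volume_pi]
    _ ≤ _ := by
        have hball := Real.volume_pi_closedBall (0 : Fin n → ℝ) hR
        rw [Fintype.card_fin] at hball
        rw [Nat.add_sub_cancel, ← hball]
        refine Measure.prod_apply_le_mul_of_slice_le hA measurableSet_closedBall (fun p hp => hp.2)
          fun y _ => ?_
        rw [← Real.volume_abs_add_mul_lt_one (β := α + ∑ j, y j * b (l.succAbove j)) hl]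
        exact measure_mono fun x hx => by simpa [add_right_comm] using hx.1

lemma abs_le_one_add_card_mul_of_abs_add_sum_lt_one {ι : Type*} [Fintype ι] {a : ℝ}
    {v b : ι → ℝ} (h : |a + ∑ j, v j * b j| < 1) : |a| ≤ 1 + Fintype.card ι * (‖v‖ * ‖b‖) := by
  have hsum : |∑ j, v j * b j| ≤ Fintype.card ι * (‖v‖ * ‖b‖) := by
    calc |∑ j, v j * b j| ≤ ∑ j, |v j| * |b j| := by
          simpa only [abs_mul] using Finset.abs_sum_le_sum_abs (fun j => v j * b j) Finset.univ
      _ ≤ ∑ _j : ι, ‖v‖ * ‖b‖ := Finset.sum_le_sum fun j _ =>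
          mul_le_mul (norm_le_pi_norm v j) (norm_le_pi_norm b j) (abs_nonneg _) (norm_nonneg _)
      _ = Fintype.card ι * (‖v‖ * ‖b‖) := by simp
  calc |a| = |(a + ∑ j, v j * b j) - ∑ j, v j * b j| := by ring_nf
    _ ≤ |a + ∑ j, v j * b j| + |∑ j, v j * b j| := abs_sub _ _
    _ ≤ _ := by linarith

lemma EuclideanSpace.norm_le_sqrt_card_mul {ι : Type*} [Fintype ι] {x : EuclideanSpace ℝ ι}
    {r : ℝ} (hr : 0 ≤ r) (h : ∀ i, |x i| ≤ r) : ‖x‖ ≤ √(Fintype.card ι) * r := by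
  rw [EuclideanSpace.norm_eq, ← Real.sqrt_sq hr, ← Real.sqrt_mul (Nat.cast_nonneg _)]
  refine Real.sqrt_le_sqrt ?_
  calc ∑ i, ‖x i‖ ^ 2 ≤ ∑ _i : ι, r ^ 2 := Finset.sum_le_sum fun i _ => by
        simpa [sq_abs] using pow_le_pow_left₀ (abs_nonneg _) (h i) 2
    _ = Fintype.card ι * r ^ 2 := by simp

lemma abs_add_sum_mul_lt_one_of_intFloor_eq {k m : ℕ} {M : Fin k → Fin m → ℝ}
    {z z' : Fin k ⊕ Fin m → ℤ}
    (h : intFloor (projMat M (latticeEmbed z)) = intFloor (projMat M (latticeEmbed z')))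
    (i : Fin k) :
    |((z - z') (Sum.inl i) : ℝ) + ∑ l, M i l * ((z - z') (Sum.inr l) : ℝ)| < 1 := by
  have := Int.abs_sub_lt_one_of_floor_eq_floor (congrFun h (Sum.inl i))
  simp only [projMat, latticeEmbed, PiLp.toLp_apply, Sum.elim_inl] at this
  refine lt_of_eq_of_lt (congrArg abs ?_) this
  push_cast [Pi.sub_apply, mul_sub, Finset.sum_sub_distrib]
  ring

lemma exists_inr_ne_of_intFloor_eq {k m : ℕ} {M : Fin k → Fin m → ℝ} {z z' : Fin k ⊕ Fin m → ℤ}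
    (h : intFloor (projMat M (latticeEmbed z)) = intFloor (projMat M (latticeEmbed z')))
    (hzz : z ≠ z') : ∃ l, (z - z') (Sum.inr l) ≠ 0 := by
  by_contra! hy
  refine sub_ne_zero.2 hzz (funext (Sum.rec (fun i => ?_) hy))
  have hrow := abs_add_sum_mul_lt_one_of_intFloor_eq h i
  simp only [hy, Int.cast_zero, mul_zero, Finset.sum_const_zero, add_zero] at hrow
  exact Int.abs_lt_one_iff.1 (by exact_mod_cast hrow)

lemma dist_latticeEmbed_le_of_intFloor_eq {k m : ℕ} {M : Fin k → Fin m → ℝ}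
    {z z' : Fin k ⊕ Fin m → ℤ}
    (h : intFloor (projMat M (latticeEmbed z)) = intFloor (projMat M (latticeEmbed z')))
    {R B : ℝ} (hM : ‖M‖ ≤ R) (hB : 1 ≤ B) (hy : ∀ l, |((z - z') (Sum.inr l) : ℝ)| ≤ B) :
    dist (latticeEmbed z) (latticeEmbed z') ≤ √(k + m : ℝ) * (1 + m * R) * B := by
  have hR : 0 ≤ R := (norm_nonneg M).trans hM
  have hyB : ‖fun l => ((z - z') (Sum.inr l) : ℝ)‖ ≤ B :=
    (pi_norm_le_iff_of_nonneg (by linarith)).2 hy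
  have hcoord : ∀ j, |((z - z') j : ℝ)| ≤ (1 + m * R) * B := by
    rintro (i | l)
    · have hx := abs_le_one_add_card_mul_of_abs_add_sum_lt_one
        (abs_add_sum_mul_lt_one_of_intFloor_eq h i)
      have hMi : ‖M i‖ ≤ R := (norm_le_pi_norm M i).trans hM
      rw [Fintype.card_fin] at hx
      calc _ ≤ _ := hx
        _ ≤ B + m * (R * B) := by gcongr
        _ = (1 + m * R) * B := by ring
    · exact (hy l).trans
        (le_mul_of_one_le_left (by linarith) (le_add_of_nonneg_right (by positivity)))
  have hsub : latticeEmbed z - latticeEmbed z' = latticeEmbed (z - z') := by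
    ext j; simp [latticeEmbed]
  rw [dist_eq_norm, hsub, mul_assoc]
  simpa using EuclideanSpace.norm_le_sqrt_card_mul (x := latticeEmbed (z - z'))
    (by positivity) hcoord

lemma volume_setOf_intFloor_eq_le {k m : ℕ} (z z' : Fin k ⊕ Fin m → ℤ) {l : Fin m}
    (hl : (z - z') (Sum.inr l) ≠ 0) {R : ℝ} (hR : 0 ≤ R) :
    volume {M : Fin k → Fin m → ℝ | ‖M‖ ≤ R ∧
        intFloor (projMat M (latticeEmbed z)) = intFloor (projMat M (latticeEmbed z'))} ≤
      ENNReal.ofReal ((2 / |((z - z') (Sum.inr l) : ℝ)| * (2 * R) ^ (m - 1)) ^ k) := by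
  set w := z - z'
  calc _ ≤ volume (Set.pi univ fun i => {v : Fin m → ℝ |
        |(w (Sum.inl i) : ℝ) + ∑ j, v j * (w (Sum.inr j) : ℝ)| < 1} ∩ closedBall 0 R) :=
        measure_mono fun M hM i _ => ⟨abs_add_sum_mul_lt_one_of_intFloor_eq hM.2 i,
          mem_closedBall_zero_iff.2 ((norm_le_pi_norm M i).trans hM.1)⟩
    _ = ∏ i, volume ({v : Fin m → ℝ |
        |(w (Sum.inl i) : ℝ) + ∑ j, v j * (w (Sum.inr j) : ℝ)| < 1} ∩ closedBall 0 R) :=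
        volume_pi_pi _
    _ ≤ ∏ _i : Fin k,
        ENNReal.ofReal (2 / |(w (Sum.inr l) : ℝ)|) * ENNReal.ofReal ((2 * R) ^ (m - 1)) :=
        Finset.prod_le_prod' fun i _ =>
          volume_slab_inter_closedBall_le _ _ (Int.cast_ne_zero.2 hl) hR
    _ = _ := by
        rw [← ENNReal.ofReal_mul (by positivity), ENNReal.ofReal_pow (by positivity)]; simp

theorem stmt_13_general (k m : ℕ) (hk : 1 ≤ k)
    (𝓜 : Set (Fin k → Fin m → ℝ)) (hcomp : IsCompact 𝓜) :
    ∃ c > (0 : ℝ), ∀ z z' : (Fin k ⊕ Fin m) → ℤ, z ≠ z' →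
      volume {M : Fin k → Fin m → ℝ | M ∈ 𝓜 ∧
          intFloor (projMat M (latticeEmbed z)) = intFloor (projMat M (latticeEmbed z'))} ≤
        ENNReal.ofReal (c * dist (latticeEmbed z) (latticeEmbed z') ^ (-(k : ℝ))) := by
  obtain ⟨R, hR, hMR⟩ := hcomp.isBounded.exists_pos_norm_le
  set C : ℝ := √(k + m : ℝ) * (1 + m * R)
  have hC : 0 < C := mul_pos (Real.sqrt_pos.2 (by positivity)) (by positivity)
  refine ⟨(2 * C * (2 * R) ^ (m - 1)) ^ k, by positivity, fun z z' hzz => ?_⟩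
  rcases eq_empty_or_nonempty {M | M ∈ 𝓜 ∧
      intFloor (projMat M (latticeEmbed z)) = intFloor (projMat M (latticeEmbed z'))}
    with hS | ⟨M₀, hM₀, hfloor₀⟩
  · simp only [hS, measure_empty, zero_le]
  obtain ⟨l₀, hl₀⟩ := exists_inr_ne_of_intFloor_eq hfloor₀ hzz
  have : Nonempty (Fin m) := ⟨l₀⟩
  obtain ⟨l, hl⟩ := Finite.exists_max fun l => |((z - z') (Sum.inr l) : ℝ)|
  set B := |((z - z') (Sum.inr l) : ℝ)|
  have hB : 1 ≤ B := (by exact_mod_cast Int.one_le_abs hl₀ : (1 : ℝ) ≤ _).trans (hl l₀)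
  set D := dist (latticeEmbed z) (latticeEmbed z')
  have hD : D ≤ C * B := dist_latticeEmbed_le_of_intFloor_eq hfloor₀ (hMR M₀ hM₀) hB hl
  have hD0 : 0 < D := dist_pos.2 fun h => hzz (funext fun j => by
    simpa [latticeEmbed] using congrArg (· j) h)
  calc _ ≤ volume {M : Fin k → Fin m → ℝ | ‖M‖ ≤ R ∧
        intFloor (projMat M (latticeEmbed z)) = intFloor (projMat M (latticeEmbed z'))} :=
        measure_mono fun M hM => ⟨hMR M hM.1, hM.2⟩
    _ ≤ ENNReal.ofReal ((2 / B * (2 * R) ^ (m - 1)) ^ k) :=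
        volume_setOf_intFloor_eq_le z z' (fun h => by norm_num [B, h] at hB) hR.le
    _ ≤ _ := by
        refine ENNReal.ofReal_le_ofReal ?_
        rw [Real.rpow_neg hD0.le, Real.rpow_natCast, ← div_eq_mul_inv, ← div_pow]
        gcongr
        calc 2 / B * (2 * R) ^ (m - 1) = 2 * C * (2 * R) ^ (m - 1) / (C * B) := by field_simp
          _ ≤ 2 * C * (2 * R) ^ (m - 1) / D := div_le_div_of_nonneg_left (by positivity) hD0 hD

/-- Transversality: for a compact set `𝓜` of `k × (d-k)` matrices there is `c > 0` such that
for distinct lattice points `z ≠ z'` the set of `M ∈ 𝓜` with `⌊P_M z⌋ = ⌊P_M z'⌋` has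
Lebesgue measure at most `c · |z - z'|^{-k}` (Euclidean norm). -/
theorem stmt_13 (k m : ℕ) (hk : 1 ≤ k) (hm : 1 ≤ m)
    (𝓜 : Set (Fin k → Fin m → ℝ)) (hcomp : IsCompact 𝓜) :
    ∃ c > (0 : ℝ), ∀ z z' : (Fin k ⊕ Fin m) → ℤ, z ≠ z' →
      volume {M : Fin k → Fin m → ℝ | M ∈ 𝓜 ∧
          intFloor (projMat M (latticeEmbed z)) = intFloor (projMat M (latticeEmbed z'))} ≤
        ENNReal.ofReal (c * dist (latticeEmbed z) (latticeEmbed z') ^ (-(k : ℝ))) :=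
  stmt_13_general k m hk 𝓜 hcomp

end
end
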